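/- Let Q = Q_s ∪ Q_u be a finite set of modes, let each map û ↦ f_q(û, ∇J(û)) be OSC, LB, and nonempty- and convex-valued relative to Û, and suppose there exist χ ≥ 1, class-K∞ functions α_{1,q}, α_{2,q}, constants λ_s > 0, λ_u > 0, and continuously differentiable functions V_q : O_V → ℝ≥0 on an open set O_V ⊇ Û, such that for all û ∈ Û: α_{1,q}(|û|_𝒪) ≤ V_q(û) ≤ α_{2,q}(|û|_𝒪) for all q ∈ Q; ⟨∇V_q(û), f̃⟩ ≤ −λ_s V_q(û) for all q ∈ Q_s and f̃ ∈ f_q(û,∇J(û)); ⟨∇V_q(û), f̃⟩ ≤ λ_u V_q(û) for all q ∈ Q_u and f̃ ∈ f_q(û,∇J(û)); and V_p(û) ≤ χ V_q(û) for all p,q ∈ Q. Let η₁ > 0, η₂ ∈ [0,1), N₀ ≥ 1, T₀ ≥ 0 satisfy λ_s > η₁ ln(χ) + η₂(λ_s + λ_u). Then the hybrid system with state (û,q,τ₁,τ₂), flows (û̇ ∈ f_q(û,∇J(û)), q̇ = 0, τ̇₁ ∈ [0,η₁], τ̇₂ ∈ [0,η₂] − 1_{Q_u}(q)) on Û×Q×[0,N₀]×[0,T₀],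 and jumps (û⁺ = û, q⁺ ∈ Q∖{q}, τ₁⁺ = τ₁ − 1, τ₂⁺ = τ₂) on Û×Q×[1,N₀]×[0,T₀], renders the compact set 𝒪×Q×[0,N₀]×[0,T₀] UGAS; moreover, every solution has a hybrid time domain satisfying the average dwell-time bound j − i ≤ η₁(t − s) + N₀ for all hybrid times (s,i), (t,j) in the domain with s + i ≤ t + j, and the activation-time bound ∫_s^t 1_{Q_u}(q(r, j(r))) dr ≤ T₀ + η₂(t − s), where j(r) is the least j with (r,j) in the domain. -/

import Mathlib

open Set Filter Metric MeasureTheory Topology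
open scoped RealInnerProductSpace

noncomputable section

namespace HS

/-- Euclidean space `ℝ^n`. -/
abbrev E (n : ℕ) : Type := EuclideanSpace ℝ (Fin n)

/-- Data of a hybrid system `H = (C, F, D, G)`: flows `ẋ ∈ F x` on `C`,
jumps `x⁺ ∈ G x` on `D`. -/
structure System (X : Type*) where
  C : Set X
  F : X → Set X
  D : Set X
  G : X → Set X

variable {X Y : Type*}

/-- Outer semicontinuity of a set-valued map relative to a set `K` (sequential form). -/
def OSCRel [TopologicalSpace X] [TopologicalSpace Y] (M : X → Set Y) (K : Set X) : Prop :=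
  ∀ (z : X) (s : Y) (zs : ℕ → X) (ss : ℕ → Y),
    z ∈ K → (∀ i, zs i ∈ K) → Tendsto zs atTop (𝓝 z) →
    (∀ i, ss i ∈ M (zs i)) → Tendsto ss atTop (𝓝 s) → s ∈ M z

/-- Local boundedness of a set-valued map relative to a set `K`. -/
def LocBddRel [TopologicalSpace X] [Bornology Y] (M : X → Set Y) (K : Set X) : Prop :=
  ∀ z ∈ K, ∃ U : Set X, IsOpen U ∧ z ∈ U ∧ Bornology.IsBounded (⋃ x ∈ U ∩ K, M x)

/-- The Hybrid Basic Conditions. -/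
def BasicConditions [NormedAddCommGroup X] [NormedSpace ℝ X] (H : System X) : Prop :=
  IsClosed H.C ∧ IsClosed H.D ∧
  OSCRel H.F H.C ∧ LocBddRel H.F H.C ∧
  (∀ x ∈ H.C, (H.F x).Nonempty ∧ Convex ℝ (H.F x)) ∧
  OSCRel H.G H.D ∧ LocBddRel H.G H.D ∧ (∀ x ∈ H.D, (H.G x).Nonempty)

/-- Compact hybrid time domains. -/
def IsCompactHTD (E : Set (ℝ × ℕ)) : Prop :=
  ∃ (J : ℕ) (t : ℕ → ℝ), t 0 = 0 ∧ (∀ j, j < J → t j ≤ t (j+1)) ∧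
    E = ⋃ j ∈ Finset.range J, Icc (t j) (t (j+1)) ×ˢ ({j} : Set ℕ)

/-- Hybrid time domains: unions of nondecreasing sequences of compact hybrid time domains. -/
def IsHTD (E : Set (ℝ × ℕ)) : Prop :=
  ∃ Ek : ℕ → Set (ℝ × ℕ), (∀ k, IsCompactHTD (Ek k)) ∧ Monotone Ek ∧ E = ⋃ k, Ek k

/-- A hybrid arc: a function defined on a hybrid time domain containing `(0,0)`. -/
structure Arc (X : Type*) where
  dom : Set (ℝ × ℕ)
  htd : IsHTD dom
  init : ((0:ℝ), (0:ℕ)) ∈ dom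
  val : ℝ × ℕ → X

/-- The `j`-th flow interval `I_j` of a hybrid time domain. -/
def slice (dom : Set (ℝ × ℕ)) (j : ℕ) : Set ℝ := {t | (t, j) ∈ dom}

/-- Solutions of a hybrid system: absolutely continuous (encoded via an integrable
a.e. selection of the flow map) along flows, and satisfying the jump conditions. -/
def IsSolution [NormedAddCommGroup X] [NormedSpace ℝ X] (H : System X) (x : Arc X) : Prop :=
  x.val (0,0) ∈ H.C ∪ H.D ∧
  (∀ j : ℕ, ∃ v : ℝ → X,
    (∀ᵐ t ∂(volume.restrict (slice x.dom j)),
      x.val (t, j) ∈ H.C ∧ v t ∈ H.F (x.val (t, j))) ∧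
    (∀ t ∈ slice x.dom j, ∀ t' ∈ slice x.dom j,
      IntervalIntegrable v volume t' t ∧
      x.val (t, j) - x.val (t', j) = ∫ s in t'..t, v s)) ∧
  (∀ (t : ℝ) (j : ℕ), (t, j) ∈ x.dom → (t, j+1) ∈ x.dom →
    x.val (t, j) ∈ H.D ∧ x.val (t, j+1) ∈ H.G (x.val (t, j)))

/-- Maximal solutions. -/
def IsMaximal [NormedAddCommGroup X] [NormedSpace ℝ X] (H : System X) (x : Arc X) : Prop :=
  IsSolution H x ∧ ∀ ψ : Arc X, IsSolution H ψ → x.dom ⊆ ψ.dom →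
    (∀ p ∈ x.dom, ψ.val p = x.val p) → ψ.dom ⊆ x.dom

/-- Complete solutions: unbounded hybrid time domain. -/
def Complete (x : Arc X) : Prop := ∀ m : ℝ, ∃ p ∈ x.dom, m < p.1 + (p.2 : ℝ)

/-- Bounded solutions: bounded range. -/
def BoundedArc [Bornology X] (x : Arc X) : Prop := Bornology.IsBounded (x.val '' x.dom)

/-- Class-KL functions. -/
def ClassKL (β : ℝ → ℝ → ℝ) : Prop :=
  (∀ r s, 0 ≤ r → 0 ≤ s → 0 ≤ β r s) ∧
  (∀ s, 0 ≤ s → MonotoneOn (fun r => β r s) (Ici 0)) ∧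
  (∀ r, 0 ≤ r → AntitoneOn (fun s => β r s) (Ici 0)) ∧
  (∀ s, 0 ≤ s → Tendsto (fun r => β r s) (𝓝[>] 0) (𝓝 0)) ∧
  (∀ r, 0 ≤ r → Tendsto (fun s => β r s) atTop (𝓝 0))

/-- Class-K∞ functions. -/
def ClassKInf (α : ℝ → ℝ) : Prop :=
  ContinuousOn α (Ici 0) ∧ α 0 = 0 ∧ StrictMonoOn α (Ici 0) ∧ Tendsto α atTop atTop

/-- Uniform global asymptotic stability of a set `A`. -/
def UGAS [NormedAddCommGroup X] [NormedSpace ℝ X] (H : System X) (A : Set X) : Prop :=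
  ∃ β, ClassKL β ∧ ∀ x : Arc X, IsMaximal H x → ∀ p ∈ x.dom,
    infDist (x.val p) A ≤ β (infDist (x.val (0,0)) A) (p.1 + (p.2 : ℝ))

/-- Uniform global exponential stability of a set `A`. -/
def UGES [NormedAddCommGroup X] [NormedSpace ℝ X] (H : System X) (A : Set X) : Prop :=
  ∃ c₁ c₂ : ℝ, 0 < c₁ ∧ 0 < c₂ ∧ ∀ x : Arc X, IsMaximal H x → ∀ p ∈ x.dom,
    infDist (x.val p) A ≤ c₁ * infDist (x.val (0,0)) A * Real.exp (-(c₂ * (p.1 + (p.2 : ℝ))))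

/-- The KL-plus-offset bound on all maximal solutions starting in `S`. -/
def SolBound [NormedAddCommGroup X] [NormedSpace ℝ X]
    (H : System X) (A : Set X) (β : ℝ → ℝ → ℝ) (ν : ℝ) (S : Set X) : Prop :=
  ∀ x : Arc X, IsMaximal H x → x.val (0,0) ∈ S → ∀ p ∈ x.dom,
    infDist (x.val p) A ≤ β (infDist (x.val (0,0)) A) (p.1 + (p.2 : ℝ)) + ν

/-- SGPAS as `ε → 0⁺` for a one-parameter family of hybrid systems. -/
def SGPAS1 [NormedAddCommGroup X] [NormedSpace ℝ X]
    (H : ℝ → System X) (A : Set X) : Prop :=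
  ∃ β, ClassKL β ∧ ∀ Δ ν : ℝ, 0 < ν → ν < Δ →
    ∃ e1 > (0:ℝ), ∀ ε1 ∈ Ioo (0:ℝ) e1,
      SolBound (H ε1) A β ν {z | infDist z A ≤ Δ}

/-- SGPAS as `(ε₁, ε₂, ε₃) → 0⁺` (parameters tuned sequentially). -/
def SGPAS3 [NormedAddCommGroup X] [NormedSpace ℝ X]
    (H : ℝ → ℝ → ℝ → System X) (A : Set X) : Prop :=
  ∃ β, ClassKL β ∧ ∀ Δ ν : ℝ, 0 < ν → ν < Δ →
    ∃ e1 > (0:ℝ), ∀ ε1 ∈ Ioo (0:ℝ) e1,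
    ∃ e2 > (0:ℝ), ∀ ε2 ∈ Ioo (0:ℝ) e2,
    ∃ e3 > (0:ℝ), ∀ ε3 ∈ Ioo (0:ℝ) e3,
      SolBound (H ε1 ε2 ε3) A β ν {z | infDist z A ≤ Δ}

/-- SGPAS as `(ε₁, ε₂, ε₃, ε₄) → 0⁺` (parameters tuned sequentially). -/
def SGPAS4 [NormedAddCommGroup X] [NormedSpace ℝ X]
    (H : ℝ → ℝ → ℝ → ℝ → System X) (A : Set X) : Prop :=
  ∃ β, ClassKL β ∧ ∀ Δ ν : ℝ, 0 < ν → ν < Δ →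
    ∃ e1 > (0:ℝ), ∀ ε1 ∈ Ioo (0:ℝ) e1,
    ∃ e2 > (0:ℝ), ∀ ε2 ∈ Ioo (0:ℝ) e2,
    ∃ e3 > (0:ℝ), ∀ ε3 ∈ Ioo (0:ℝ) e3,
    ∃ e4 > (0:ℝ), ∀ ε4 ∈ Ioo (0:ℝ) e4,
      SolBound (H ε1 ε2 ε3 ε4) A β ν {z | infDist z A ≤ Δ}

/-- SGPAS as `(ε₁, ..., ε₅) → 0⁺` (parameters tuned sequentially). -/
def SGPAS5 [NormedAddCommGroup X] [NormedSpace ℝ X]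
    (H : ℝ → ℝ → ℝ → ℝ → ℝ → System X) (A : Set X) : Prop :=
  ∃ β, ClassKL β ∧ ∀ Δ ν : ℝ, 0 < ν → ν < Δ →
    ∃ e1 > (0:ℝ), ∀ ε1 ∈ Ioo (0:ℝ) e1,
    ∃ e2 > (0:ℝ), ∀ ε2 ∈ Ioo (0:ℝ) e2,
    ∃ e3 > (0:ℝ), ∀ ε3 ∈ Ioo (0:ℝ) e3,
    ∃ e4 > (0:ℝ), ∀ ε4 ∈ Ioo (0:ℝ) e4,
    ∃ e5 > (0:ℝ), ∀ ε5 ∈ Ioo (0:ℝ) e5,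
      SolBound (H ε1 ε2 ε3 ε4 ε5) A β ν {z | infDist z A ≤ Δ}

/-- Global practical asymptotic stability as `(ε₁, ε₂, ε₃, ε₄) → 0⁺`:
no restriction on the initial condition. -/
def GPAS4 [NormedAddCommGroup X] [NormedSpace ℝ X]
    (H : ℝ → ℝ → ℝ → ℝ → System X) (A : Set X) : Prop :=
  ∃ β, ClassKL β ∧ ∀ ν : ℝ, 0 < ν →
    ∃ e1 > (0:ℝ), ∀ ε1 ∈ Ioo (0:ℝ) e1,
    ∃ e2 > (0:ℝ), ∀ ε2 ∈ Ioo (0:ℝ) e2,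
    ∃ e3 > (0:ℝ), ∀ ε3 ∈ Ioo (0:ℝ) e3,
    ∃ e4 > (0:ℝ), ∀ ε4 ∈ Ioo (0:ℝ) e4,
      SolBound (H ε1 ε2 ε3 ε4) A β ν univ

/-- `(τ, ε)`-closeness of two hybrid arcs. -/
def Close [PseudoMetricSpace X] (τ ε : ℝ) (x y : Arc X) : Prop :=
  (∀ (t : ℝ) (j : ℕ), (t, j) ∈ x.dom → t + (j : ℝ) ≤ τ →
    ∃ s : ℝ, 0 ≤ s ∧ (s, j) ∈ y.dom ∧ |t - s| ≤ ε ∧ dist (x.val (t, j)) (y.val (s, j)) < ε) ∧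
  (∀ (t : ℝ) (j : ℕ), (t, j) ∈ y.dom → t + (j : ℝ) ≤ τ →
    ∃ s : ℝ, 0 ≤ s ∧ (s, j) ∈ x.dom ∧ |t - s| ≤ ε ∧ dist (y.val (t, j)) (x.val (s, j)) < ε)

/-- The `ρ`-inflation of a hybrid system, with inflation profile `σ`. -/
def inflate [NormedAddCommGroup X] [NormedSpace ℝ X] (H : System X) (σ : X → ℝ) (ρ : ℝ) :
    System X where
  C := {x | (closedBall x (ρ * σ x) ∩ H.C).Nonempty}
  F := fun x => {v | ∃ w ∈ closure (convexHull ℝ (⋃ y ∈ closedBall x (ρ * σ x) ∩ H.C, H.F y)),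
      ‖v - w‖ ≤ ρ * σ x}
  D := {x | (closedBall x (ρ * σ x) ∩ H.D).Nonempty}
  G := fun x => {v | ∃ y ∈ closedBall x (ρ * σ x) ∩ H.D, ∃ g ∈ H.G y, ‖v - g‖ ≤ ρ * σ g}

/-- Extraction of the `û`-component (first `n` coordinates of `x_{u,z} ∈ ℝ^{n+r}`). -/
def uhat (n r : ℕ) (x : E (n+r)) : E n := WithLp.toLp 2 (fun i => x (Fin.castAdd r i))

/-- Extraction of the `ẑ`-component (last `r` coordinates of `x_{u,z} ∈ ℝ^{n+r}`). -/
def zhat (n r : ℕ) (x : E (n+r)) : E r := WithLp.toLp 2 (fun i => x (Fin.natAdd n i))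

/-- The matrix `𝔻` extracting the odd-indexed entries of `μ ∈ ℝ^{2n}`. -/
def Dmat (n : ℕ) (μ : E (2*n)) : E n := WithLp.toLp 2 (fun i => μ ⟨2 * i.1, by have := i.2; omega⟩)

/-- The torus `𝕊^n ⊆ ℝ^{2n}`: product of `n` unit circles. -/
def Sph (n : ℕ) : Set (E (2*n)) :=
  {μ | ∀ i : Fin n,
    (μ ⟨2*i.1, by have := i.2; omega⟩)^2 + (μ ⟨2*i.1+1, by have := i.2; omega⟩)^2 = 1}

/-- The block-diagonal oscillator matrix `Φ(ω)` acting on `μ ∈ ℝ^{2n}`, with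
`ω_i = κ_i / ε_ω` and 2×2 blocks `ω_i R₀`, `R₀ = [[0,1],[-1,0]]`. -/
def Phi (n : ℕ) (κ : Fin n → ℚ) (εω : ℝ) (μ : E (2*n)) : E (2*n) :=
  WithLp.toLp 2 (fun j => if h : j.1 % 2 = 0 then
      ((κ ⟨j.1/2, by have := j.2; omega⟩ : ℝ) / εω) * μ ⟨j.1+1, by have := j.2; omega⟩
    else
      -(((κ ⟨j.1/2, by have := j.2; omega⟩ : ℝ) / εω) * μ ⟨j.1-1, by have := j.2; omega⟩))

/-- The set `A := 𝒪 × Ψ` viewed inside `ℝ^{n+r}`. -/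
def setA (n r : ℕ) (O : Set (E n)) (Ψ : Set (E r)) : Set (E (n+r)) :=
  {x | uhat n r x ∈ O ∧ zhat n r x ∈ Ψ}

/-- The finite mode set `Q = {1, …, q_max}` embedded in `ℝ`. -/
def Qset (qmax : ℕ) : Set ℝ := {q | ∃ k : Fin qmax, q = (k : ℕ) + 1}

open scoped Classical

/-- Indicator of the unstable modes (`unst k = true`), as a function of the
real-embedded mode variable. -/
noncomputable def indU (qmax : ℕ) (unst : Fin qmax → Bool) (q : ℝ) : ℝ :=
  if ∃ k : Fin qmax, q = (k : ℕ) + 1 ∧ unst k = true then 1 else 0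

/-- The switching hybrid system with average dwell-time automaton `τ₁` and
activation-time monitor `τ₂`: state `(u, q, τ₁, τ₂)`. -/
def swAT {n : ℕ} (qmax : ℕ) (unst : Fin qmax → Bool)
    (f : Fin qmax → E n → E n → Set (E n)) (J : E n → ℝ)
    (Uh : Set (E n)) (N₀ T₀ η₁ η₂ : ℝ) : System (E n × ℝ × ℝ × ℝ) where
  C := Uh ×ˢ Qset qmax ×ˢ Icc 0 N₀ ×ˢ Icc 0 T₀
  F := fun z => {v | (∃ k : Fin qmax, z.2.1 = (k : ℕ) + 1 ∧
      v.1 ∈ f k z.1 (gradient J z.1)) ∧ v.2.1 = 0 ∧ v.2.2.1 ∈ Icc 0 η₁ ∧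
      v.2.2.2 ∈ Icc (0 - indU qmax unst z.2.1) (η₂ - indU qmax unst z.2.1)}
  D := Uh ×ˢ Qset qmax ×ˢ Icc 1 N₀ ×ˢ Icc 0 T₀
  G := fun z => {v | v.1 = z.1 ∧ v.2.1 ∈ Qset qmax \ {z.2.1} ∧
      v.2.2.1 = z.2.2.1 - 1 ∧ v.2.2.2 = z.2.2.2}

/-! ### Auxiliary lemmas: hybrid time domains -/

variable {dom : Set (ℝ × ℕ)}

lemma mem_compactHTD_iff {E : Set (ℝ × ℕ)} {J : ℕ} {ts : ℕ → ℝ}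
    (hE : E = ⋃ j ∈ Finset.range J, Icc (ts j) (ts (j+1)) ×ˢ ({j} : Set ℕ)) {t : ℝ} {j : ℕ} :
    (t, j) ∈ E ↔ j < J ∧ ts j ≤ t ∧ t ≤ ts (j+1) := by
  subst hE
  simp only [Set.mem_iUnion, Finset.mem_range, Set.mem_prod, Set.mem_Icc, Set.mem_singleton_iff]
  constructor
  · rintro ⟨i, hi, ⟨h1, h2⟩, rfl⟩; exact ⟨hi, h1, h2⟩
  · rintro ⟨hj, h1, h2⟩; exact ⟨j, hj, ⟨h1, h2⟩, rfl⟩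

/-- Any three points of a hybrid time domain lie in a common compact HTD. -/
lemma IsHTD.exists_compact₃ (h : IsHTD dom) {p q r : ℝ × ℕ}
    (hp : p ∈ dom) (hq : q ∈ dom) (hr : r ∈ dom) :
    ∃ (J : ℕ) (ts : ℕ → ℝ), ts 0 = 0 ∧ (∀ a b, a ≤ b → b ≤ J → ts a ≤ ts b) ∧
      (∀ (w : ℝ) (m : ℕ), m < J → ts m ≤ w → w ≤ ts (m+1) → (w, m) ∈ dom) ∧
      (p.2 < J ∧ ts p.2 ≤ p.1 ∧ p.1 ≤ ts (p.2+1)) ∧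
      (q.2 < J ∧ ts q.2 ≤ q.1 ∧ q.1 ≤ ts (q.2+1)) ∧
      (r.2 < J ∧ ts r.2 ≤ r.1 ∧ r.1 ≤ ts (r.2+1)) := by
  obtain ⟨Ek, hcpt, hmono, rfl⟩ := h
  obtain ⟨Sp, ⟨kp, rfl⟩, hpk⟩ := hp
  obtain ⟨Sq, ⟨kq, rfl⟩, hqk⟩ := hq
  obtain ⟨Sr, ⟨kr, rfl⟩, hrk⟩ := hr
  set k := max kp (max kq kr) with hk
  have hpk' : p ∈ Ek k := hmono (le_max_left _ _) hpk
  have hqk' : q ∈ Ek k := hmono (le_max_of_le_right (le_max_left _ _)) hqk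
  have hrk' : r ∈ Ek k := hmono (le_max_of_le_right (le_max_right _ _)) hrk
  obtain ⟨J, ts, hts0, htsm, hEeq⟩ := hcpt k
  have hmono' : ∀ a b, a ≤ b → b ≤ J → ts a ≤ ts b := by
    intro a b hab hbJ
    induction b with
    | zero => simp_all
    | succ b ih =>
      rcases Nat.lt_or_ge a (b+1) with hlt | hge
      · exact le_trans (ih (Nat.lt_succ_iff.mp hlt) (le_trans (Nat.le_succ _) hbJ))
          (htsm b (Nat.lt_of_succ_le hbJ))
      · have : a = b + 1 := le_antisymm hab hge
        simp [this]
  have hmem : ∀ (w : ℝ) (m : ℕ), m < J → ts m ≤ w → w ≤ ts (m+1) → (w, m) ∈ ⋃ k, Ek k := by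
    intro w m hm h1 h2
    exact Set.mem_iUnion.mpr ⟨k, (mem_compactHTD_iff hEeq).mpr ⟨hm, h1, h2⟩⟩
  obtain ⟨e1, e2⟩ := p
  obtain ⟨f1, f2⟩ := q
  obtain ⟨g1, g2⟩ := r
  rw [mem_compactHTD_iff hEeq] at hpk' hqk' hrk'
  exact ⟨J, ts, hts0, hmono', hmem, hpk', hqk', hrk'⟩

lemma IsHTD.exists_compact (h : IsHTD dom) {p q : ℝ × ℕ} (hp : p ∈ dom) (hq : q ∈ dom) :
    ∃ (J : ℕ) (ts : ℕ → ℝ), ts 0 = 0 ∧ (∀ a b, a ≤ b → b ≤ J → ts a ≤ ts b) ∧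
      (∀ (w : ℝ) (m : ℕ), m < J → ts m ≤ w → w ≤ ts (m+1) → (w, m) ∈ dom) ∧
      (p.2 < J ∧ ts p.2 ≤ p.1 ∧ p.1 ≤ ts (p.2+1)) ∧
      (q.2 < J ∧ ts q.2 ≤ q.1 ∧ q.1 ≤ ts (q.2+1)) := by
  obtain ⟨J, ts, h0, h1, h2, h3, h4, _⟩ := h.exists_compact₃ hp hq hq
  exact ⟨J, ts, h0, h1, h2, h3, h4⟩

lemma IsHTD.time_nonneg (h : IsHTD dom) {t : ℝ} {j : ℕ} (ht : (t, j) ∈ dom) : 0 ≤ t := by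
  obtain ⟨J, ts, h0, hmono, _, ⟨hJ, h1, _⟩, _⟩ := h.exists_compact ht ht
  calc (0:ℝ) = ts 0 := h0.symm
  _ ≤ ts j := hmono 0 j (Nat.zero_le _) hJ.le
  _ ≤ t := h1

/-- Slices of a HTD are order-connected. -/
lemma IsHTD.mem_of_between (h : IsHTD dom) {a b c : ℝ} {j : ℕ}
    (ha : (a, j) ∈ dom) (hb : (b, j) ∈ dom) (hac : a ≤ c) (hcb : c ≤ b) : (c, j) ∈ dom := by
  obtain ⟨J, ts, _, _, hmem, ⟨hJ, h1, _⟩, ⟨_, _, h2⟩⟩ := h.exists_compact ha hb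
  exact hmem c j hJ (le_trans h1 hac) (le_trans hcb h2)

lemma IsHTD.le_of_level_lt (h : IsHTD dom) {s t : ℝ} {i j : ℕ}
    (hs : (s, i) ∈ dom) (ht : (t, j) ∈ dom) (hij : i < j) : s ≤ t := by
  obtain ⟨J, ts, _, hmono, _, ⟨hJi, _, h1⟩, ⟨hJj, h2, _⟩⟩ := h.exists_compact hs ht
  exact le_trans h1 (le_trans (hmono (i+1) j hij hJj.le) h2)

/-- A point `(r,m)` cannot lie in dom at a strictly lower level `m' < m` if some `(w,m) ∈ dom`
with `w < r`. -/
lemma IsHTD.le_of_lower_level (h : IsHTD dom) {w r : ℝ} {m m' : ℕ}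
    (hw : (w, m) ∈ dom) (hr : (r, m) ∈ dom) (hr' : (r, m') ∈ dom) (hm : m' < m) : r ≤ w := by
  obtain ⟨J, ts, _, hmono, _, _, ⟨_, hw1, _⟩, ⟨_, _, hr2⟩⟩ := h.exists_compact₃ hr hw hr'
  exact le_trans hr2 (le_trans (hmono (m'+1) m hm (by omega)) hw1)

/-- The chain of jump times between two hybrid times. -/
lemma IsHTD.chain (h : IsHTD dom) {s t : ℝ} {i j : ℕ} (hs : (s, i) ∈ dom) (ht : (t, j) ∈ dom)
    (hij : i ≤ j) (hst : s ≤ t) :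
    ∃ r : ℕ → ℝ, r i = s ∧ r (j+1) = t ∧
      (∀ m, i ≤ m → m ≤ j → r m ≤ r (m+1) ∧ (r m, m) ∈ dom ∧ (r (m+1), m) ∈ dom) ∧
      (∀ m, i ≤ m → m < j → (r (m+1), m+1) ∈ dom) := by
  obtain ⟨J, ts, hts0, hmono, hmem, ⟨hJi, hsi1, hsi2⟩, ⟨hJj, htj1, htj2⟩⟩ := h.exists_compact hs ht
  have hstsm : ∀ m', i < m' → m' ≤ j → s ≤ ts m' := fun m' h1 h2 =>
    le_trans hsi2 (hmono (i+1) m' h1 (le_trans h2 hJj.le))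
  have htst : ∀ m', m' ≤ j → ts m' ≤ t := fun m' h2 =>
    le_trans (hmono m' j h2 hJj.le) htj1
  refine ⟨fun m => if m ≤ i then s else if m ≤ j then ts m else t, by simp, ?_, ?_, ?_⟩
  · have h1 : ¬ (j + 1 ≤ i) := by omega
    have h2 : ¬ (j + 1 ≤ j) := by omega
    simp [h1, h2]
  · intro m him hmj
    have hmJ : m < J := lt_of_le_of_lt hmj hJj
    by_cases hmi : m ≤ i
    · have hmi' : m = i := le_antisymm hmi him
      subst hmi'
      simp only [le_refl, if_pos]
      by_cases hmj' : m + 1 ≤ j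
      · have h1 : ¬ (m + 1 ≤ m) := by omega
        simp only [h1, if_false, hmj', if_true]
        exact ⟨hstsm (m+1) (Nat.lt_succ_self m) hmj', hs,
          hmem _ m hmJ (hmono m (m+1) (Nat.le_succ m) (by omega)) (le_refl _)⟩
      · have hmj'' : m = j := by omega
        have h1 : ¬ (m + 1 ≤ m) := by omega
        have h2 : ¬ (m + 1 ≤ j) := by omega
        simp only [h1, if_false, h2, if_false]
        exact ⟨hst, hs, hmj'' ▸ ht⟩
    · have h2 : i < m := Nat.lt_of_not_le hmi
      simp only [hmi, if_false, hmj, if_true]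
      by_cases hmj' : m + 1 ≤ j
      · have h1 : ¬ (m + 1 ≤ i) := by omega
        simp only [h1, if_false, hmj', if_true]
        exact ⟨hmono m (m+1) (Nat.le_succ m) (by omega),
          hmem _ m hmJ (le_refl _) (hmono m (m+1) (Nat.le_succ m) (by omega)),
          hmem _ m hmJ (hmono m (m+1) (Nat.le_succ m) (by omega)) (le_refl _)⟩
      · have hmj'' : m = j := by omega
        have h1 : ¬ (m + 1 ≤ i) := by omega
        simp only [h1, if_false, hmj', if_false]
        subst hmj''
        exact ⟨htst m (le_refl m), hmem _ m hmJ (le_refl _)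
          (hmono m (m+1) (Nat.le_succ m) (by omega)), ht⟩
  · intro m him hmj
    have h1 : ¬ (m + 1 ≤ i) := by omega
    have h2 : m + 1 ≤ j := by omega
    simp only [h1, if_false, h2, if_true]
    have hm1J : m + 1 < J := lt_of_le_of_lt h2 hJj
    exact hmem _ (m+1) hm1J (le_refl _) (hmono (m+1) (m+2) (by omega) (by omega))

/-- Entry point of a slice. -/
lemma IsHTD.entry (h : IsHTD dom) {t : ℝ} {j : ℕ} (ht : (t, j) ∈ dom) :
    ∃ a, 0 ≤ a ∧ a ≤ t ∧ (∀ r, a ≤ r → r ≤ t → (r, j) ∈ dom) ∧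
      (j = 0 → a = 0) ∧ ∀ i, j = i + 1 → (a, i) ∈ dom ∧ (a, i+1) ∈ dom := by
  obtain ⟨J, ts, hts0, hmono, hmem, ⟨hJj, h1, h2⟩, _⟩ := h.exists_compact ht ht
  refine ⟨ts j, hts0 ▸ hmono 0 j (Nat.zero_le _) hJj.le, h1, fun r hr1 hr2 =>
    hmem r j hJj hr1 (le_trans hr2 h2), fun hj => by simp [hj, hts0], fun i hi => ?_⟩
  subst hi
  refine ⟨hmem _ i (by omega) (hmono i (i+1) (Nat.le_succ i) (by omega)) (le_refl _),
    hmem _ (i+1) hJj (le_refl _) (hmono (i+1) (i+2) (by omega) (by omega))⟩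

/-! ### Projections -/

def puL (n : ℕ) : (E n × ℝ × ℝ × ℝ) →L[ℝ] E n := ContinuousLinearMap.fst ℝ (E n) (ℝ × ℝ × ℝ)
def pqL (n : ℕ) : (E n × ℝ × ℝ × ℝ) →L[ℝ] ℝ :=
  (ContinuousLinearMap.fst ℝ ℝ (ℝ × ℝ)).comp (ContinuousLinearMap.snd ℝ (E n) (ℝ × ℝ × ℝ))
def p1L (n : ℕ) : (E n × ℝ × ℝ × ℝ) →L[ℝ] ℝ :=
  ((ContinuousLinearMap.fst ℝ ℝ ℝ).comp (ContinuousLinearMap.snd ℝ ℝ (ℝ × ℝ))).comp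
    (ContinuousLinearMap.snd ℝ (E n) (ℝ × ℝ × ℝ))
def p2L (n : ℕ) : (E n × ℝ × ℝ × ℝ) →L[ℝ] ℝ :=
  ((ContinuousLinearMap.snd ℝ ℝ ℝ).comp (ContinuousLinearMap.snd ℝ ℝ (ℝ × ℝ))).comp
    (ContinuousLinearMap.snd ℝ (E n) (ℝ × ℝ × ℝ))
@[simp] lemma puL_apply {n : ℕ} (z : E n × ℝ × ℝ × ℝ) : puL n z = z.1 := rfl
@[simp] lemma pqL_apply {n : ℕ} (z : E n × ℝ × ℝ × ℝ) : pqL n z = z.2.1 := rfl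
@[simp] lemma p1L_apply {n : ℕ} (z : E n × ℝ × ℝ × ℝ) : p1L n z = z.2.2.1 := rfl
@[simp] lemma p2L_apply {n : ℕ} (z : E n × ℝ × ℝ × ℝ) : p2L n z = z.2.2.2 := rfl

lemma comp_interval {n : ℕ} {Y : Type*} [NormedAddCommGroup Y] [NormedSpace ℝ Y]
    [CompleteSpace Y] (L : (E n × ℝ × ℝ × ℝ) →L[ℝ] Y) {v : ℝ → E n × ℝ × ℝ × ℝ} {a b : ℝ}
    (hii : IntervalIntegrable v volume a b) :
    IntervalIntegrable (fun r => L (v r)) volume a b ∧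
      (∫ r in a..b, L (v r)) = L (∫ r in a..b, v r) :=
  ⟨⟨L.integrable_comp hii.1, L.integrable_comp hii.2⟩, L.intervalIntegral_comp_comm hii⟩

/-! ### a.e. helpers -/

lemma ae_restrict_Icc_of_uIoc {P : ℝ → Prop} {a b : ℝ} (hab : a ≤ b)
    (h : ∀ᵐ r ∂(volume : Measure ℝ), r ∈ Set.uIoc a b → P r) :
    ∀ᵐ r ∂((volume : Measure ℝ).restrict (Icc a b)), P r := by
  rw [← Measure.restrict_congr_set Ioc_ae_eq_Icc]
  rw [Set.uIoc_of_le hab] at h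
  exact (ae_restrict_iff' measurableSet_Ioc).mpr h

lemma ae_uIoc_of_restrict {P : ℝ → Prop} {S : Set ℝ} {a b : ℝ}
    (hS : ∀ r, r ∈ Set.uIcc a b → r ∈ S)
    (hae : ∀ᵐ r ∂((volume : Measure ℝ).restrict S), P r) :
    ∀ᵐ r ∂(volume : Measure ℝ), r ∈ Set.uIoc a b → P r := by
  have h1 : ∀ᵐ r ∂((volume : Measure ℝ).restrict (Set.uIoc a b)), P r :=
    ae_restrict_of_ae_restrict_of_subset
      (fun r hr => hS r (Set.Ioc_subset_Icc_self hr)) hae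
  exact (ae_restrict_iff' measurableSet_uIoc).mp h1

/-- Integral upper bound from an a.e. pointwise bound. -/
lemma integral_le_const {g : ℝ → ℝ} {c a b : ℝ} (hab : a ≤ b)
    (hg : IntervalIntegrable g volume a b)
    (hbd : ∀ᵐ r ∂(volume : Measure ℝ), r ∈ Set.uIoc a b → g r ≤ c) :
    ∫ r in a..b, g r ≤ c * (b - a) := by
  have h := intervalIntegral.integral_mono_ae_restrict hab hg
    (intervalIntegrable_const (c := c)) (ae_restrict_Icc_of_uIoc hab hbd)
  simpa [intervalIntegral.integral_const, smul_eq_mul, mul_comm] using h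

lemma const_le_integral {g : ℝ → ℝ} {c a b : ℝ} (hab : a ≤ b)
    (hg : IntervalIntegrable g volume a b)
    (hbd : ∀ᵐ r ∂(volume : Measure ℝ), r ∈ Set.uIoc a b → c ≤ g r) :
    c * (b - a) ≤ ∫ r in a..b, g r := by
  have h := intervalIntegral.integral_mono_ae_restrict hab
    (intervalIntegrable_const (c := c)) hg (ae_restrict_Icc_of_uIoc hab hbd)
  simpa [intervalIntegral.integral_const, smul_eq_mul, mul_comm] using h

/-! ### Solution facts -/

section SolFacts

variable {n qmax : ℕ} {unst : Fin qmax → Bool} {f : Fin qmax → E n → E n → Set (E n)}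
  {J : E n → ℝ} {Uh : Set (E n)} {N₀ T₀ η₁ η₂ : ℝ} {sol : Arc (E n × ℝ × ℝ × ℝ)}

lemma mem_swC_iff {z : E n × ℝ × ℝ × ℝ} :
    z ∈ (swAT qmax unst f J Uh N₀ T₀ η₁ η₂).C ↔
      z.1 ∈ Uh ∧ z.2.1 ∈ Qset qmax ∧ z.2.2.1 ∈ Icc 0 N₀ ∧ z.2.2.2 ∈ Icc 0 T₀ := by
  simp only [swAT, Set.mem_prod, Set.mem_Icc, Prod.le_def]

lemma mem_swD_iff {z : E n × ℝ × ℝ × ℝ} :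
    z ∈ (swAT qmax unst f J Uh N₀ T₀ η₁ η₂).D ↔
      z.1 ∈ Uh ∧ z.2.1 ∈ Qset qmax ∧ z.2.2.1 ∈ Icc 1 N₀ ∧ z.2.2.2 ∈ Icc 0 T₀ := by
  simp only [swAT, Set.mem_prod, Set.mem_Icc, Prod.le_def]

lemma mem_swF_iff {z v : E n × ℝ × ℝ × ℝ} :
    v ∈ (swAT qmax unst f J Uh N₀ T₀ η₁ η₂).F z ↔
      (∃ k : Fin qmax, z.2.1 = (k : ℕ) + 1 ∧ v.1 ∈ f k z.1 (gradient J z.1)) ∧ v.2.1 = 0 ∧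
        v.2.2.1 ∈ Icc 0 η₁ ∧
        v.2.2.2 ∈ Icc (0 - indU qmax unst z.2.1) (η₂ - indU qmax unst z.2.1) := Iff.rfl

lemma mem_swG_iff {z v : E n × ℝ × ℝ × ℝ} :
    v ∈ (swAT qmax unst f J Uh N₀ T₀ η₁ η₂).G z ↔
      v.1 = z.1 ∧ v.2.1 ∈ Qset qmax \ {z.2.1} ∧
        v.2.2.1 = z.2.2.1 - 1 ∧ v.2.2.2 = z.2.2.2 := Iff.rfl

lemma swD_subset_swC (hN₀ : 1 ≤ N₀) :
    (swAT qmax unst f J Uh N₀ T₀ η₁ η₂).D ⊆ (swAT qmax unst f J Uh N₀ T₀ η₁ η₂).C := by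
  intro z hz
  rw [mem_swD_iff] at hz
  rw [mem_swC_iff]
  exact ⟨hz.1, hz.2.1, ⟨le_trans (by linarith) hz.2.2.1.1, hz.2.2.1.2⟩, hz.2.2.2⟩

lemma indU_mode {k : Fin qmax} : indU qmax unst ((k : ℕ) + 1) = if unst k then 1 else 0 := by
  unfold indU
  by_cases h : unst k = true
  · rw [if_pos ⟨k, rfl, h⟩, if_pos h]
  · rw [if_neg, if_neg h]
    rintro ⟨k', hk', hu⟩
    have : (k' : ℕ) = (k : ℕ) := Nat.cast_injective (by linarith [hk'] : ((k' : ℕ) : ℝ) = (k : ℕ))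
    exact h (by rwa [show k' = k from Fin.val_injective this] at hu)

lemma mode_eq {k k' : Fin qmax} (h : ((k : ℕ) : ℝ) + 1 = ((k' : ℕ) : ℝ) + 1) : k = k' :=
  Fin.val_injective (Nat.cast_injective (by linarith : ((k : ℕ) : ℝ) = ((k' : ℕ) : ℝ)))

/-- The interval between two points of a slice lies in the slice. -/
lemma uIcc_subset_slice (hsol : IsSolution (swAT qmax unst f J Uh N₀ T₀ η₁ η₂) sol)
    {j : ℕ} {a b : ℝ} (ha : (a, j) ∈ sol.dom) (hb : (b, j) ∈ sol.dom) :
    ∀ r, r ∈ Set.uIcc a b → r ∈ slice sol.dom j := by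
  intro r hr
  rcases le_total a b with h | h
  · rw [Set.uIcc_of_le h] at hr
    exact sol.htd.mem_of_between ha hb hr.1 hr.2
  · rw [Set.uIcc_of_ge h] at hr
    exact sol.htd.mem_of_between hb ha hr.1 hr.2

/-- `q` is constant along a flow interval. -/
lemma q_const (hsol : IsSolution (swAT qmax unst f J Uh N₀ T₀ η₁ η₂) sol)
    {j : ℕ} {a b : ℝ} (ha : (a, j) ∈ sol.dom) (hb : (b, j) ∈ sol.dom) :
    (sol.val (b, j)).2.1 = (sol.val (a, j)).2.1 := by
  obtain ⟨v, hae, hint⟩ := hsol.2.1 j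
  obtain ⟨hii, heq⟩ := hint b hb a ha
  have h0 : ∀ᵐ r ∂(volume : Measure ℝ), r ∈ Set.uIoc a b → pqL n (v r) = 0 := by
    refine ae_uIoc_of_restrict (uIcc_subset_slice hsol ha hb) (hae.mono fun r hr => ?_)
    exact (mem_swF_iff.mp hr.2).2.1
  have h2 : (∫ r in a..b, pqL n (v r)) = pqL n (∫ r in a..b, v r) :=
    (comp_interval (pqL n) hii).2
  have h3 : (∫ r in a..b, pqL n (v r)) = 0 := by
    rw [intervalIntegral.integral_congr_ae (g := fun _ => (0:ℝ)) (h0.mono fun r h => h)]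
    simp
  have h4 : pqL n (sol.val (b, j) - sol.val (a, j)) = 0 := by
    rw [heq, ← h2, h3]
  simpa [sub_eq_zero] using h4

/-- Generic bound for a scalar component along a flow interval. -/
lemma comp_bound (hsol : IsSolution (swAT qmax unst f J Uh N₀ T₀ η₁ η₂) sol)
    (L : (E n × ℝ × ℝ × ℝ) →L[ℝ] ℝ) {j : ℕ} {a b c₁ c₂ : ℝ}
    (ha : (a, j) ∈ sol.dom) (hb : (b, j) ∈ sol.dom) (hab : a ≤ b)
    (hLb : ∀ z w, (w ∈ (swAT qmax unst f J Uh N₀ T₀ η₁ η₂).F z ∧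
        z ∈ (swAT qmax unst f J Uh N₀ T₀ η₁ η₂).C ∧ ((z.2.1 = (sol.val (a,j)).2.1))) →
        c₁ ≤ L w ∧ L w ≤ c₂)
    (hflow : ∀ r, r ∈ Set.uIoc a b →
        (sol.val (r, j)).2.1 = (sol.val (a, j)).2.1) :
    c₁ * (b - a) ≤ L (sol.val (b, j)) - L (sol.val (a, j)) ∧
      L (sol.val (b, j)) - L (sol.val (a, j)) ≤ c₂ * (b - a) := by
  obtain ⟨v, hae, hint⟩ := hsol.2.1 j
  obtain ⟨hii, heq⟩ := hint b hb a ha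
  obtain ⟨hiL, hL2⟩ := comp_interval L hii
  have key : L (sol.val (b, j)) - L (sol.val (a, j)) = ∫ r in a..b, L (v r) := by
    rw [hL2, ← heq, map_sub]
  have haeb : ∀ᵐ r ∂(volume : Measure ℝ), r ∈ Set.uIoc a b →
      (c₁ ≤ L (v r) ∧ L (v r) ≤ c₂) := by
    have h1 : ∀ᵐ r ∂(volume : Measure ℝ), r ∈ Set.uIoc a b →
        (sol.val (r, j) ∈ (swAT qmax unst f J Uh N₀ T₀ η₁ η₂).C ∧
          v r ∈ (swAT qmax unst f J Uh N₀ T₀ η₁ η₂).F (sol.val (r, j))) :=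
      ae_uIoc_of_restrict (uIcc_subset_slice hsol ha hb) hae
    exact h1.mono fun r hr hrm =>
      hLb _ _ ⟨(hr hrm).2, (hr hrm).1, hflow r hrm⟩
  rw [key]
  constructor
  · exact const_le_integral hab hiL (haeb.mono fun r h hm => (h hm).1)
  · exact integral_le_const hab hiL (haeb.mono fun r h hm => (h hm).2)

lemma tau1_bound (hsol : IsSolution (swAT qmax unst f J Uh N₀ T₀ η₁ η₂) sol)
    {j : ℕ} {a b : ℝ} (ha : (a, j) ∈ sol.dom) (hb : (b, j) ∈ sol.dom) (hab : a ≤ b) :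
    (sol.val (b, j)).2.2.1 ≤ (sol.val (a, j)).2.2.1 + η₁ * (b - a) := by
  have h := (comp_bound hsol (p1L n) ha hb hab (c₁ := 0) (c₂ := η₁)
    (fun z w hw => by
      have := (mem_swF_iff.mp hw.1).2.2.1
      simpa using this)
    (fun r hr => q_const hsol ha (uIcc_subset_slice hsol ha hb r (Set.Ioc_subset_Icc_self hr)))).2
  simp only [p1L_apply] at h
  linarith

lemma tau2_bound (hsol : IsSolution (swAT qmax unst f J Uh N₀ T₀ η₁ η₂) sol)
    {j : ℕ} {a b : ℝ} (ha : (a, j) ∈ sol.dom) (hb : (b, j) ∈ sol.dom) (hab : a ≤ b) :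
    (sol.val (b, j)).2.2.2 ≤ (sol.val (a, j)).2.2.2 +
      (η₂ - indU qmax unst ((sol.val (a, j)).2.1)) * (b - a) := by
  have h := (comp_bound hsol (p2L n) ha hb hab
    (c₁ := 0 - indU qmax unst ((sol.val (a, j)).2.1))
    (c₂ := η₂ - indU qmax unst ((sol.val (a, j)).2.1))
    (fun z w hw => by
      have h2 := (mem_swF_iff.mp hw.1).2.2.2
      rw [hw.2.2] at h2
      simpa using h2)
    (fun r hr => q_const hsol ha (uIcc_subset_slice hsol ha hb r (Set.Ioc_subset_Icc_self hr)))).2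
  simp only [p2L_apply] at h
  linarith

/-- Continuity of a solution along a flow interval. -/
lemma cont_on_slice (hsol : IsSolution (swAT qmax unst f J Uh N₀ T₀ η₁ η₂) sol)
    {j : ℕ} {a b : ℝ} (ha : (a, j) ∈ sol.dom) (hb : (b, j) ∈ sol.dom) (hab : a ≤ b) :
    ContinuousOn (fun r => sol.val (r, j)) (Icc a b) := by
  obtain ⟨v, hae, hint⟩ := hsol.2.1 j
  have hsub : ∀ r, r ∈ Icc a b → r ∈ slice sol.dom j := by
    intro r hr
    exact uIcc_subset_slice hsol ha hb r (by rwa [Set.uIcc_of_le hab])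
  have hrep : ∀ r ∈ Icc a b, sol.val (r, j) = sol.val (a, j) + ∫ s in a..r, v s := by
    intro r hr
    have := (hint r (hsub r hr) a (hsub a ⟨le_refl a, hab⟩)).2
    linear_combination (norm := abel) this
  have hii : IntervalIntegrable v volume a b := (hint b (hsub b ⟨hab, le_refl b⟩) a
    (hsub a ⟨le_refl a, hab⟩)).1
  have hcont : ContinuousOn (fun r => sol.val (a, j) + ∫ s in a..r, v s) (Icc a b) := by
    refine continuousOn_const.add ?_
    have := intervalIntegral.continuousOn_primitive_interval' hii
      (by rw [Set.uIcc_of_le hab]; exact ⟨le_refl a, hab⟩)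
    rwa [Set.uIcc_of_le hab] at this
  exact ContinuousOn.congr hcont hrep

lemma Qset_finite : (Qset qmax).Finite := by
  have : Qset qmax = Set.range (fun k : Fin qmax => ((k : ℕ) : ℝ) + 1) := by
    ext q; simp [Qset, eq_comm]
  rw [this]
  exact Set.finite_range _

lemma swC_closed (hUcl : IsClosed Uh) :
    IsClosed (swAT qmax unst f J Uh N₀ T₀ η₁ η₂).C :=
  hUcl.prod ((Qset_finite.isClosed).prod (isClosed_Icc.prod isClosed_Icc))

/-- Solutions remain in the flow set everywhere on their domain. -/
lemma mem_C (hsol : IsSolution (swAT qmax unst f J Uh N₀ T₀ η₁ η₂) sol)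
    (hUcl : IsClosed Uh) (hN₀ : 1 ≤ N₀) :
    ∀ t j, (t, j) ∈ sol.dom → sol.val (t, j) ∈ (swAT qmax unst f J Uh N₀ T₀ η₁ η₂).C := by
  intro t j htj
  obtain ⟨a, ha0, hat, hIcc, hj0, hjump⟩ := sol.htd.entry htj
  rcases eq_or_lt_of_le hat with heq | hlt
  · -- degenerate slice start: t = a
    rcases Nat.eq_zero_or_eq_succ_pred j with hj | hj
    · subst hj
      have ht0 : t = 0 := heq ▸ hj0 rfl
      have h00 : sol.val ((0:ℝ), (0:ℕ)) ∈ _ := hsol.1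
      rcases h00 with h | h
      · rwa [ht0]
      · rw [ht0]; exact swD_subset_swC hN₀ h
    · have hj' : j = (j - 1) + 1 := hj
      obtain ⟨hd1, hd2⟩ := hjump (j-1) hj'
      have hjc := hsol.2.2 a (j-1) hd1 (by rw [← hj'] at hd2; exact hj' ▸ hd2)
      -- val (a, j) ∈ G (val (a, j-1)), val (a, j-1) ∈ D
      obtain ⟨hD, hG⟩ := hjc
      rw [mem_swG_iff] at hG
      rw [mem_swD_iff] at hD
      rw [← heq, hj', mem_swC_iff]
      refine ⟨hG.1 ▸ hD.1, hG.2.1.1, ?_, hG.2.2.2 ▸ hD.2.2.2⟩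
      rw [hG.2.2.1]
      exact ⟨by linarith [hD.2.2.1.1], by linarith [hD.2.2.1.2, hN₀]⟩
  · -- nondegenerate: approximate `t` from the left by a.e. good points
    obtain ⟨v, hae, hint⟩ := hsol.2.1 j
    have haj : (a, j) ∈ sol.dom := hIcc a (le_refl a) hat
    have hfull : ∀ᵐ r ∂((volume : Measure ℝ).restrict (Icc a t)),
        sol.val (r, j) ∈ (swAT qmax unst f J Uh N₀ T₀ η₁ η₂).C := by
      refine ae_restrict_of_ae_restrict_of_subset ?_ (hae.mono fun r hr => hr.1)
      intro r hr; exact hIcc r hr.1 hr.2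
    have hgood : ∀ m : ℕ, ∃ r, r ∈ Icc a t ∧
        sol.val (r, j) ∈ (swAT qmax unst f J Uh N₀ T₀ η₁ η₂).C ∧ t - r ≤ 1/(m+1) := by
      intro m
      by_contra hcon
      push_neg at hcon
      set c := max a (t - 1/(m+1)) with hc
      have hct : c < t := by
        apply max_lt hlt
        have : (0:ℝ) < 1/(m+1) := by positivity
        linarith
      have hsubbad : Icc c t ⊆ {r | ¬ sol.val (r, j) ∈ (swAT qmax unst f J Uh N₀ T₀ η₁ η₂).C}
          ∩ Icc a t := by
        intro r hr
        have hrIcc : r ∈ Icc a t := ⟨le_trans (le_max_left _ _) hr.1, hr.2⟩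
        refine ⟨fun hmem => ?_, hrIcc⟩
        have : t - r ≤ 1/(m+1) := by
          have := hr.1
          have h2 : t - 1/(m+1) ≤ c := le_max_right _ _
          linarith
        exact absurd this (not_le.mpr (hcon r hrIcc hmem))
      have hzero : (volume : Measure ℝ) ({r | ¬ sol.val (r, j) ∈
          (swAT qmax unst f J Uh N₀ T₀ η₁ η₂).C} ∩ Icc a t) = 0 := by
        have := ae_iff.mp hfull
        rwa [Measure.restrict_apply' measurableSet_Icc] at this
      have : (volume : Measure ℝ) (Icc c t) = 0 :=
        measure_mono_null hsubbad hzero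
      rw [Real.volume_Icc] at this
      exact absurd this (by simp [ENNReal.ofReal_eq_zero]; linarith)
    choose r hr1 hr2 hr3 using hgood
    have hrt : Tendsto r atTop (𝓝 t) := by
      have h0 : Tendsto (fun m : ℕ => r m - t) atTop (𝓝 0) := by
        apply squeeze_zero_norm (fun m => ?_) tendsto_one_div_add_atTop_nhds_zero_nat
        rw [Real.norm_eq_abs, abs_sub_comm, abs_of_nonneg (by linarith [(hr1 m).2])]
        exact hr3 m
      have := h0.add_const t
      simpa using this
    have hcw : ContinuousWithinAt (fun s => sol.val (s, j)) (Icc a t) t :=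
      (cont_on_slice hsol haj htj hat).continuousWithinAt
        (by exact ⟨hat, le_refl t⟩)
    have htends : Tendsto (fun m => sol.val (r m, j)) atTop
        (𝓝 (sol.val (t, j))) := by
      apply hcw.tendsto.comp
      exact tendsto_nhdsWithin_iff.mpr ⟨hrt, Filter.Eventually.of_forall hr1⟩
    exact (swC_closed hUcl).mem_of_tendsto htends (Filter.Eventually.of_forall hr2)

set_option maxHeartbeats 1000000 in
/-- Lyapunov decay/growth along a flow interval (Grönwall). -/
lemma gron_slice
    (hsol : IsSolution (swAT qmax unst f J Uh N₀ T₀ η₁ η₂) sol)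
    (hUcl : IsClosed Uh) (hN₀ : 1 ≤ N₀)
    {OV : Set (E n)} (hOV : IsOpen OV) (hUOV : Uh ⊆ OV)
    {V : Fin qmax → E n → ℝ} (hV : ∀ q, ContDiffOn ℝ 1 (V q) OV)
    {lams lamu : ℝ}
    (hreg : ∀ q : Fin qmax, LocBddRel (fun uu => f q uu (gradient J uu)) Uh)
    (hstab : ∀ q : Fin qmax, unst q = false → ∀ uu ∈ Uh,
      ∀ ft ∈ f q uu (gradient J uu), ⟪gradient (V q) uu, ft⟫ ≤ -(lams * V q uu))
    (hunst : ∀ q : Fin qmax, unst q = true → ∀ uu ∈ Uh,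
      ∀ ft ∈ f q uu (gradient J uu), ⟪gradient (V q) uu, ft⟫ ≤ lamu * V q uu)
    {j : ℕ} {a b : ℝ} (ha : (a, j) ∈ sol.dom) (hb : (b, j) ∈ sol.dom) (hab : a ≤ b)
    {k : Fin qmax} (hk : (sol.val (a, j)).2.1 = (k : ℕ) + 1) :
    V k ((sol.val (b, j)).1) ≤ V k ((sol.val (a, j)).1) *
      Real.exp ((if unst k then lamu else -lams) * (b - a)) := by
  set c : ℝ := if unst k then lamu else -lams with hc
  set w : ℝ → ℝ := fun s => V k ((sol.val (s, j)).1) with hwdef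
  have hIccslice : ∀ s ∈ Icc a b, (s, j) ∈ sol.dom := fun s hs =>
    uIcc_subset_slice hsol ha hb s (by rwa [Set.uIcc_of_le hab])
  have hmemU : ∀ s ∈ Icc a b, (sol.val (s, j)).1 ∈ Uh := fun s hs =>
    (mem_swC_iff.mp (mem_C hsol hUcl hN₀ s j (hIccslice s hs))).1
  have hcont : ContinuousOn (fun s => sol.val (s, j)) (Icc a b) := cont_on_slice hsol ha hb hab
  have hwcont : ContinuousOn w (Icc a b) := by
    apply ((hV k).continuousOn).comp (continuous_fst.comp_continuousOn hcont)
    intro s hs; exact hUOV (hmemU s hs)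
  have hqc : ∀ s ∈ Icc a b, (sol.val (s, j)).2.1 = (k : ℕ) + 1 := fun s hs => by
    rw [q_const hsol ha (hIccslice s hs), hk]
  have dini : ∀ x ∈ Ico a b, ∀ ρ, c * w x < ρ →
      ∃ᶠ z in 𝓝[>] x, (z - x)⁻¹ * (w z - w x) < ρ := by
    intro x hx ρ hρ
    obtain ⟨v, hae, hint⟩ := hsol.2.1 j
    have hxIcc : x ∈ Icc a b := ⟨hx.1, hx.2.le⟩
    set u0 := (sol.val (x, j)).1 with hu0
    have hu0Uh : u0 ∈ Uh := hmemU x hxIcc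
    have hu0OV : u0 ∈ OV := hUOV hu0Uh
    obtain ⟨U, hUopen, hu0U, hUbdd⟩ := hreg k u0 hu0Uh
    obtain ⟨M0, hM0⟩ := (Metric.isBounded_iff_subset_closedBall 0).mp hUbdd
    set M := max M0 0 with hMdef
    have hMnn : (0:ℝ) ≤ M := le_max_right _ _
    have hM : ∀ y, y ∈ U ∩ Uh → ∀ ft ∈ f k y (gradient J y), ‖ft‖ ≤ M := by
      intro y hy ft hft
      have h1 : ft ∈ ⋃ x' ∈ U ∩ Uh, f k x' (gradient J x') :=
        Set.mem_biUnion hy hft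
      have := hM0 h1
      rw [Metric.mem_closedBall, dist_zero_right] at this
      exact le_trans this (le_max_left _ _)
    have hgradcont : ContinuousOn (fun y => gradient (V k) y) OV := by
      have h1 : ContinuousOn (fderiv ℝ (V k)) OV :=
        (hV k).continuousOn_fderiv_of_isOpen hOV le_rfl
      exact (InnerProductSpace.toDual ℝ (E n)).symm.continuous.comp_continuousOn h1
    set G := gradient (V k) u0 with hG
    set ε' := (ρ - c * w x) / (|c| + 2*M + 1) with he'
    have hden : (0:ℝ) < |c| + 2*M + 1 := by positivity
    have hε' : 0 < ε' := div_pos (by linarith) hden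
    have hUO : IsOpen (U ∩ OV) := hUopen.inter hOV
    obtain ⟨δ₁, hδ₁, hball₁⟩ := Metric.isOpen_iff.mp hUO u0 ⟨hu0U, hu0OV⟩
    have hcw := hgradcont u0 hu0OV
    rw [Metric.continuousWithinAt_iff] at hcw
    obtain ⟨δ₂, hδ₂, hgrad⟩ := hcw ε' hε'
    set δ := min δ₁ δ₂ / 2 with hδdef
    have hδ : 0 < δ := by positivity
    have hδδ₁ : δ < δ₁ := by
      calc δ = min δ₁ δ₂ / 2 := rfl
      _ < min δ₁ δ₂ := half_lt_self (lt_min hδ₁ hδ₂)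
      _ ≤ δ₁ := min_le_left _ _
    have hδδ₂ : δ < δ₂ := by
      calc δ = min δ₁ δ₂ / 2 := rfl
      _ < min δ₁ δ₂ := half_lt_self (lt_min hδ₁ hδ₂)
      _ ≤ δ₂ := min_le_right _ _
    have hballU : closedBall u0 δ ⊆ U ∩ OV := by
      intro y hy
      apply hball₁
      rw [Metric.mem_ball]
      exact lt_of_le_of_lt hy hδδ₁
    have hgradball : ∀ y ∈ closedBall u0 δ, ‖gradient (V k) y - G‖ ≤ ε' := by
      intro y hy
      have hyOV : y ∈ OV := (hballU hy).2
      have hdy : dist y u0 < δ₂ := lt_of_le_of_lt hy hδδ₂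
      have := hgrad hyOV hdy
      rw [dist_eq_norm] at this
      exact this.le
    -- continuity of the state and of `w` at `x` within `Icc a b`
    have hcx := hcont x hxIcc
    rw [Metric.continuousWithinAt_iff] at hcx
    obtain ⟨δ₃, hδ₃, hstate⟩ := hcx δ hδ
    have hwx := hwcont x hxIcc
    rw [Metric.continuousWithinAt_iff] at hwx
    obtain ⟨δ₄, hδ₄, hwcl⟩ := hwx ε' hε'
    set δ₅ := min δ₃ δ₄ with hδ₅def
    have hδ₅ : 0 < δ₅ := lt_min hδ₃ hδ₄
    set zmax := min b (x + δ₅/2) with hzmax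
    have hxzmax : x < zmax := lt_min hx.2 (by linarith)
    -- uniform bounds on `Icc a b` points close to `x`
    have hclose : ∀ s, s ∈ Icc a b → dist s x < δ₅ →
        (sol.val (s, j)).1 ∈ closedBall u0 δ ∧ |w s - w x| ≤ ε' := by
      intro s hs hds
      constructor
      · have := hstate hs (lt_of_lt_of_le hds (min_le_left _ _))
        rw [Metric.mem_closedBall]
        calc dist (sol.val (s,j)).1 u0 ≤ dist (sol.val (s,j)) (sol.val (x,j)) := by
              rw [Prod.dist_eq]; exact le_max_left _ _
        _ ≤ δ := this.le
      · have := hwcl hs (lt_of_lt_of_le hds (min_le_right _ _))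
        rw [Real.dist_eq] at this
        exact this.le
    have hmain : ∀ z ∈ Ioc x zmax, (z - x)⁻¹ * (w z - w x) < ρ := by
      intro z hz
      have hxz : x < z := hz.1
      have hzb : z ≤ b := le_trans hz.2 (min_le_left _ _)
      have hzx5 : z - x ≤ δ₅/2 := by
        have := le_trans hz.2 (min_le_right _ _); linarith
      have hzIcc : z ∈ Icc a b := ⟨le_trans hx.1 hxz.le, hzb⟩
      obtain ⟨hii, heq⟩ := hint z (hIccslice z hzIcc) x (hIccslice x hxIcc)
      set uz := (sol.val (z, j)).1 with huz
      -- the `u`-displacement as an integral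
      obtain ⟨hiipu, hpueq⟩ := comp_interval (puL n) hii
      have hudiff : uz - u0 = ∫ r in x..z, puL n (v r) := by
        rw [hpueq, ← heq]; simp; rfl
      -- a.e. bounds
      have h1 : ∀ᵐ r ∂(volume : Measure ℝ), r ∈ Set.uIoc x z →
          (sol.val (r, j) ∈ (swAT qmax unst f J Uh N₀ T₀ η₁ η₂).C ∧
            v r ∈ (swAT qmax unst f J Uh N₀ T₀ η₁ η₂).F (sol.val (r, j))) :=
        ae_uIoc_of_restrict
          (uIcc_subset_slice hsol (hIccslice x hxIcc) (hIccslice z hzIcc)) hae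
      have hIsub : Set.uIoc x z ⊆ Icc a b := by
        rw [Set.uIoc_of_le hxz.le]
        intro r hr
        exact ⟨le_trans hx.1 hr.1.le, le_trans hr.2 hzb⟩
      have hrclose : ∀ r ∈ Set.uIoc x z, dist r x < δ₅ := by
        intro r hr
        rw [Set.uIoc_of_le hxz.le] at hr
        rw [Real.dist_eq, abs_of_pos (by linarith [hr.1])]
        linarith [hr.2, hzx5, hδ₅]
      have key : ∀ᵐ r ∂(volume : Measure ℝ), r ∈ Set.uIoc x z →
          (‖puL n (v r)‖ ≤ M ∧
            ((innerSL ℝ G).comp (puL n)) (v r) ≤ c * w x + |c| * ε' + ε' * M) := by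
        refine h1.mono fun r hr hrm => ?_
        obtain ⟨hrC, hrF⟩ := hr hrm
        have hrIcc : r ∈ Icc a b := hIsub hrm
        obtain ⟨hcb, hwb⟩ := hclose r hrIcc (hrclose r hrm)
        set ur := (sol.val (r, j)).1 with hur
        have hurUh : ur ∈ Uh := hmemU r hrIcc
        have hurU : ur ∈ U := (hballU hcb).1
        obtain ⟨⟨k', hk', hfk'⟩, -, -, -⟩ := mem_swF_iff.mp hrF
        have hkk : k' = k := by
          apply mode_eq
          rw [← hk', hqc r hrIcc]
        subst hkk
        have hnormb : ‖puL n (v r)‖ ≤ M := hM ur ⟨hurU, hurUh⟩ _ hfk'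
        refine ⟨hnormb, ?_⟩
        have hinr : ⟪gradient (V k') ur, (v r).1⟫ ≤ c * w r := by
          rcases Bool.eq_false_or_eq_true (unst k') with htrue | hfalse
          · have := hunst k' htrue ur hurUh _ hfk'
            rw [hc, if_pos htrue]
            calc ⟪gradient (V k') ur, (v r).1⟫ ≤ lamu * V k' ur := this
            _ = lamu * w r := by rw [hwdef]
          · have := hstab k' hfalse ur hurUh _ hfk'
            rw [hc, if_neg (by simp [hfalse])]
            calc ⟪gradient (V k') ur, (v r).1⟫ ≤ -(lams * V k' ur) := this
            _ = -lams * w r := by rw [hwdef]; ring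
        have hsplit : ((innerSL ℝ G).comp (puL n)) (v r) =
            ⟪gradient (V k') ur, (v r).1⟫ + ⟪G - gradient (V k') ur, (v r).1⟫ := by
          simp only [ContinuousLinearMap.coe_comp', Function.comp_apply, puL_apply,
            innerSL_apply_apply]
          rw [inner_sub_left]
          ring
        rw [hsplit]
        have hcs : ⟪G - gradient (V k') ur, (v r).1⟫ ≤ ε' * M := by
          calc ⟪G - gradient (V k') ur, (v r).1⟫ ≤ ‖G - gradient (V k') ur‖ * ‖(v r).1‖ :=
            real_inner_le_norm _ _
          _ ≤ ε' * M := by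
            apply mul_le_mul _ _ (norm_nonneg _) hε'.le
            · rw [← norm_neg]; simpa using hgradball ur hcb
            · simpa using hnormb
        have hcr : c * w r ≤ c * w x + |c| * ε' := by
          have : c * (w r - w x) ≤ |c| * ε' := by
            calc c * (w r - w x) ≤ |c * (w r - w x)| := le_abs_self _
            _ = |c| * |w r - w x| := abs_mul _ _
            _ ≤ |c| * ε' := by
              apply mul_le_mul_of_nonneg_left hwb (abs_nonneg c)
          linarith
        linarith
      -- integral bounds
      obtain ⟨hiiG, hGeq⟩ := comp_interval ((innerSL ℝ G).comp (puL n)) hii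
      have hGint : ⟪G, uz - u0⟫ = ∫ r in x..z, ((innerSL ℝ G).comp (puL n)) (v r) := by
        rw [hGeq, ← heq]
        simp; rfl
      have hGbound : (∫ r in x..z, ((innerSL ℝ G).comp (puL n)) (v r)) ≤
          (c * w x + |c| * ε' + ε' * M) * (z - x) :=
        integral_le_const hxz.le hiiG (key.mono fun r h hm => (h hm).2)
      -- norm bound on displacement
      have hnorm : ‖uz - u0‖ ≤ M * (z - x) := by
        rw [hudiff]
        have := intervalIntegral.norm_integral_le_of_norm_le
          (a := x) (b := z) (g := fun _ => M) (μ := volume)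
          (f := fun r => puL n (v r)) hxz.le ?_ ?_
        · calc ‖∫ r in x..z, puL n (v r)‖ ≤ |∫ r in x..z, (M:ℝ)| := this.trans (le_abs_self _)
          _ = M * (z - x) := by
            rw [intervalIntegral.integral_const, smul_eq_mul]
            rw [abs_of_nonneg (by nlinarith)]
            ring
        · exact (key.mono fun r h hm => (h (by rwa [Set.uIoc_of_le hxz.le])).1)
        · exact intervalIntegrable_const
      -- mean value estimate
      have hcb0 : u0 ∈ closedBall u0 δ := Metric.mem_closedBall_self hδ.le
      have hcbz : uz ∈ closedBall u0 δ :=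
        (hclose z hzIcc (by rw [Real.dist_eq, abs_of_pos (by linarith)]; linarith)).1
      have hMVT : ‖V k uz - V k u0 - (fderiv ℝ (V k) u0) (uz - u0)‖ ≤ ε' * ‖uz - u0‖ := by
        apply Convex.norm_image_sub_le_of_norm_fderiv_le'
          (fun y hy => ((hV k).differentiableOn one_ne_zero).differentiableAt
            (hOV.mem_nhds (hballU hy).2))
          (fun y hy => ?_) (convex_closedBall _ _) hcb0 hcbz
        have heqf : ∀ y', fderiv ℝ (V k) y' =
            (InnerProductSpace.toDual ℝ (E n)) (gradient (V k) y') := by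
          intro y'
          rw [gradient, LinearIsometryEquiv.apply_symm_apply]
        rw [heqf y, heqf u0, ← map_sub, LinearIsometryEquiv.norm_map]
        exact hgradball y hy
      have hfdG : (fderiv ℝ (V k) u0) (uz - u0) = ⟪G, uz - u0⟫ := by
        rw [hG, gradient, InnerProductSpace.toDual_symm_apply]
      -- combine
      have hcomb : w z - w x ≤ (z - x) * (c * w x + ε' * (|c| + 2*M)) := by
        have h2 : w z - w x - ⟪G, uz - u0⟫ ≤ ε' * (M * (z - x)) := by
          have := le_trans (le_abs_self _) hMVT
          rw [hfdG] at this
          calc w z - w x - ⟪G, uz - u0⟫ ≤ ε' * ‖uz - u0‖ := this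
          _ ≤ ε' * (M * (z - x)) := mul_le_mul_of_nonneg_left hnorm hε'.le
        have h3 : ⟪G, uz - u0⟫ ≤ (c * w x + |c| * ε' + ε' * M) * (z - x) := by
          rw [hGint]; exact hGbound
        have h4 : (c * w x + |c| * ε' + ε' * M) * (z - x) + ε' * (M * (z - x)) =
            (z - x) * (c * w x + ε' * (|c| + 2*M)) := by ring
        linarith
      rw [inv_mul_eq_div, div_lt_iff₀ (by linarith : (0:ℝ) < z - x)]
      have hfin : c * w x + ε' * (|c| + 2*M) < ρ := by
        have h4 : ε' * (|c| + 2*M + 1) = ρ - c * w x := by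
          rw [he']
          field_simp
        have h5 : ε' * (|c| + 2*M) = ε' * (|c| + 2*M + 1) - ε' := by ring
        linarith
      have h6 := mul_lt_mul_of_pos_left hfin (show (0:ℝ) < z - x by linarith)
      linarith
    have hev : ∀ᶠ z in 𝓝[>] x, z ∈ Ioc x zmax :=
      Ioc_mem_nhdsGT_of_mem ⟨le_refl x, hxzmax⟩
    exact ((hev.mono fun z hz => hmain z hz)).frequently
  have := le_gronwallBound_of_liminf_deriv_right_le (f := w) (f' := fun s => c * w s)
    (δ := w a) (K := c) (ε := 0) (a := a) (b := b) hwcont dini le_rfl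
    (fun x _ => by simp) b ⟨hab, le_refl b⟩
  rwa [gronwallBound_ε0] at this

lemma jump_facts (hsol : IsSolution (swAT qmax unst f J Uh N₀ T₀ η₁ η₂) sol)
    {t : ℝ} {j : ℕ} (h1 : (t, j) ∈ sol.dom) (h2 : (t, j+1) ∈ sol.dom) :
    (sol.val (t, j+1)).1 = (sol.val (t, j)).1 ∧
      (sol.val (t, j+1)).2.1 ∈ Qset qmax ∧
      (sol.val (t, j+1)).2.2.1 = (sol.val (t, j)).2.2.1 - 1 ∧
      (sol.val (t, j+1)).2.2.2 = (sol.val (t, j)).2.2.2 ∧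
      sol.val (t, j) ∈ (swAT qmax unst f J Uh N₀ T₀ η₁ η₂).D := by
  obtain ⟨hD, hG⟩ := hsol.2.2 t j h1 h2
  rw [mem_swG_iff] at hG
  exact ⟨hG.1, hG.2.1.1, hG.2.2.1, hG.2.2.2, hD⟩

lemma mode_exists (hsol : IsSolution (swAT qmax unst f J Uh N₀ T₀ η₁ η₂) sol)
    (hUcl : IsClosed Uh) (hN₀ : 1 ≤ N₀) {t : ℝ} {j : ℕ} (ht : (t, j) ∈ sol.dom) :
    ∃ k : Fin qmax, (sol.val (t, j)).2.1 = ((k : ℕ) : ℝ) + 1 :=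
  (mem_swC_iff.mp (mem_C hsol hUcl hN₀ t j ht)).2.1

/-- The average dwell-time bound. -/
lemma adt_bound (hsol : IsSolution (swAT qmax unst f J Uh N₀ T₀ η₁ η₂) sol)
    (hUcl : IsClosed Uh) (hN₀ : 1 ≤ N₀) (hη₁ : 0 < η₁) :
    ∀ (s t : ℝ) (i j : ℕ), (s, i) ∈ sol.dom → (t, j) ∈ sol.dom →
      s + (i : ℝ) ≤ t + (j : ℝ) → (j : ℝ) - (i : ℝ) ≤ η₁ * (t - s) + N₀ := by
  intro s t i j hsd htd hsum
  rcases le_or_gt j i with hji | hij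
  · have h2 : (0:ℝ) ≤ (i:ℝ) - j := sub_nonneg.mpr (by exact_mod_cast hji)
    have hts : 0 ≤ t - s := le_trans h2 (by linarith)
    nlinarith [mul_nonneg hη₁.le hts]
  · have hst : s ≤ t := sol.htd.le_of_level_lt hsd htd hij
    obtain ⟨r, hri, hrj1, hflow, hjump⟩ := sol.htd.chain hsd htd hij.le hst
    have key : ∀ m, i ≤ m → m ≤ j → (sol.val (r m, m)).2.2.1 ≤
        (sol.val (s, i)).2.2.1 + η₁ * (r m - s) - ((m : ℝ) - (i : ℝ)) := by
      intro m him
      induction m, him using Nat.le_induction with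
      | base => intro _; rw [hri]; simp
      | succ m him ih =>
        intro hmj
        have hmj' : m ≤ j := by omega
        have hmlt : m < j := by omega
        obtain ⟨hle, hm1, hm2⟩ := hflow m him hmj'
        have hstep := tau1_bound hsol hm1 hm2 hle
        have hjm := jump_facts hsol hm2 (hjump m him hmlt)
        rw [hjm.2.2.1]
        have hih := ih hmj'
        push_cast
        linarith
    obtain ⟨hle, hm1, hm2⟩ := hflow j (le_of_lt hij) (le_refl j)
    have hstep := tau1_bound hsol hm1 hm2 hle
    rw [hrj1] at hstep
    have hkey := key j hij.le (le_refl j)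
    have h0 : 0 ≤ (sol.val (t, j)).2.2.1 :=
      (mem_swC_iff.mp (mem_C hsol hUcl hN₀ t j htd)).2.2.1.1
    have hN : (sol.val (s, i)).2.2.1 ≤ N₀ :=
      (mem_swC_iff.mp (mem_C hsol hUcl hN₀ s i hsd)).2.2.1.2
    have hrj1' : r (j+1) = t := hrj1
    linarith

/-- One flow interval of the activation-time integrand. -/
lemma act_piece (hsol : IsSolution (swAT qmax unst f J Uh N₀ T₀ η₁ η₂) sol)
    {m : ℕ} {a b : ℝ} (ha : (a, m) ∈ sol.dom) (hb : (b, m) ∈ sol.dom) (hab : a ≤ b) :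
    IntervalIntegrable (fun r => indU qmax unst
        ((sol.val (r, sInf {j' : ℕ | (r, j') ∈ sol.dom})).2.1)) volume a b ∧
      (∫ r in a..b, indU qmax unst
        ((sol.val (r, sInf {j' : ℕ | (r, j') ∈ sol.dom})).2.1)) ≤
        η₂ * (b - a) - ((sol.val (b, m)).2.2.2 - (sol.val (a, m)).2.2.2) := by
  set g : ℝ → ℝ := fun r => indU qmax unst
    ((sol.val (r, sInf {j' : ℕ | (r, j') ∈ sol.dom})).2.1) with hg
  set cm : ℝ := indU qmax unst ((sol.val (a, m)).2.1) with hcm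
  have heqn : ∀ r, r ∈ Set.uIoc a b → g r = cm := by
    intro r hr
    rw [Set.uIoc_of_le hab] at hr
    have hrd : (r, m) ∈ sol.dom := sol.htd.mem_of_between ha hb hr.1.le hr.2
    have hne : {j' : ℕ | (r, j') ∈ sol.dom}.Nonempty := ⟨m, hrd⟩
    have hmem : (r, sInf {j' : ℕ | (r, j') ∈ sol.dom}) ∈ sol.dom := Nat.sInf_mem hne
    have heqm : sInf {j' : ℕ | (r, j') ∈ sol.dom} = m := by
      apply le_antisymm (Nat.sInf_le hrd)
      by_contra hlt
      push_neg at hlt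
      have := sol.htd.le_of_lower_level ha hrd hmem hlt
      linarith [hr.1]
    rw [hg, hcm]
    simp only [heqm]
    rw [q_const hsol ha hrd]
  have hii : IntervalIntegrable g volume a b := by
    apply (intervalIntegrable_const (c := cm) (μ := volume) (a := a) (b := b)).congr_ae
    apply (ae_restrict_iff' measurableSet_uIoc).mpr
    exact Filter.Eventually.of_forall fun r hr => (heqn r hr).symm
  refine ⟨hii, ?_⟩
  have hint : (∫ r in a..b, g r) = cm * (b - a) := by
    rw [intervalIntegral.integral_congr_ae (g := fun _ => cm)
      (Filter.Eventually.of_forall heqn)]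
    rw [intervalIntegral.integral_const, smul_eq_mul, mul_comm]
  rw [hint]
  have := tau2_bound hsol ha hb hab
  rw [← hcm] at this
  linarith

/-- The activation-time bound. -/
lemma act_bound (hsol : IsSolution (swAT qmax unst f J Uh N₀ T₀ η₁ η₂) sol)
    (hUcl : IsClosed Uh) (hN₀ : 1 ≤ N₀) (hT₀ : 0 ≤ T₀) :
    ∀ (s t : ℝ) (i j : ℕ), (s, i) ∈ sol.dom → (t, j) ∈ sol.dom →
      s + (i : ℝ) ≤ t + (j : ℝ) →
      (∫ r in s..t, indU qmax unst
        ((sol.val (r, sInf {j' : ℕ | (r, j') ∈ sol.dom})).2.1)) ≤ T₀ + η₂ * (t - s) := by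
  intro s t i j hsd htd hsum
  set g : ℝ → ℝ := fun r => indU qmax unst
    ((sol.val (r, sInf {j' : ℕ | (r, j') ∈ sol.dom})).2.1) with hg
  rcases lt_or_ge j i with hji | hij
  · exfalso
    have hts : t ≤ s := sol.htd.le_of_level_lt htd hsd hji
    have h1 : (1:ℝ) ≤ (i:ℝ) - (j:ℝ) := by
      have : j + 1 ≤ i := hji
      have := (Nat.cast_le (α := ℝ)).mpr this
      push_cast at this
      linarith
    linarith
  · have hst : s ≤ t := by
      rcases eq_or_lt_of_le hij with heq | hlt
      · subst heq; linarith
      · exact sol.htd.le_of_level_lt hsd htd hlt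
    obtain ⟨r, hri, hrj1, hflow, hjump⟩ := sol.htd.chain hsd htd hij hst
    have key : ∀ m, i ≤ m → m ≤ j →
        IntervalIntegrable g volume s (r m) ∧
        (∫ r' in s..(r m), g r') ≤ η₂ * (r m - s) -
          ((sol.val (r m, m)).2.2.2 - (sol.val (s, i)).2.2.2) := by
      intro m him
      induction m, him using Nat.le_induction with
      | base =>
        intro _
        rw [hri]
        refine ⟨IntervalIntegrable.refl, ?_⟩
        rw [intervalIntegral.integral_same]
        simp
      | succ m him ih =>
        intro hmj
        have hmj' : m ≤ j := by omega
        have hmlt : m < j := by omega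
        obtain ⟨hle, hm1, hm2⟩ := hflow m him hmj'
        obtain ⟨hii2, hbd2⟩ := act_piece hsol hm1 hm2 hle
        obtain ⟨hii1, hbd1⟩ := ih hmj'
        have hjm := jump_facts hsol hm2 (hjump m him hmlt)
        refine ⟨hii1.trans hii2, ?_⟩
        rw [← intervalIntegral.integral_add_adjacent_intervals hii1 hii2]
        rw [hjm.2.2.2.1]
        linarith
    obtain ⟨hle, hm1, hm2⟩ := hflow j hij (le_refl j)
    obtain ⟨hii2, hbd2⟩ := act_piece hsol hm1 hm2 hle
    obtain ⟨hii1, hbd1⟩ := key j hij (le_refl j)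
    have htot : (∫ r' in s..t, g r') ≤ η₂ * (t - s) -
        ((sol.val (t, j)).2.2.2 - (sol.val (s, i)).2.2.2) := by
      have hrj1' : r (j+1) = t := hrj1
      rw [hrj1'] at hle hm2 hii2 hbd2
      rw [← intervalIntegral.integral_add_adjacent_intervals hii1 hii2]
      linarith
    have h0 : 0 ≤ (sol.val (t, j)).2.2.2 :=
      (mem_swC_iff.mp (mem_C hsol hUcl hN₀ t j htd)).2.2.2.1
    have hT : (sol.val (s, i)).2.2.2 ≤ T₀ :=
      (mem_swC_iff.mp (mem_C hsol hUcl hN₀ s i hsd)).2.2.2.2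
    linarith

set_option maxHeartbeats 1000000 in
/-- The Lyapunov bound along a solution. -/
lemma lyap_bound (hsol : IsSolution (swAT qmax unst f J Uh N₀ T₀ η₁ η₂) sol)
    (hUcl : IsClosed Uh) (hN₀ : 1 ≤ N₀) (hT₀ : 0 ≤ T₀)
    {χ : ℝ} (hχ : 1 ≤ χ)
    {OV : Set (E n)} (hOV : IsOpen OV) (hUOV : Uh ⊆ OV)
    {V : Fin qmax → E n → ℝ} (hV : ∀ q, ContDiffOn ℝ 1 (V q) OV)
    {lams lamu : ℝ}
    (hreg : ∀ q : Fin qmax, LocBddRel (fun uu => f q uu (gradient J uu)) Uh)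
    (hstab : ∀ q : Fin qmax, unst q = false → ∀ uu ∈ Uh,
      ∀ ft ∈ f q uu (gradient J uu), ⟪gradient (V q) uu, ft⟫ ≤ -(lams * V q uu))
    (hunst : ∀ q : Fin qmax, unst q = true → ∀ uu ∈ Uh,
      ∀ ft ∈ f q uu (gradient J uu), ⟪gradient (V q) uu, ft⟫ ≤ lamu * V q uu)
    (hcomp : ∀ p q : Fin qmax, ∀ uu ∈ Uh, V p uu ≤ χ * V q uu)
    {t : ℝ} {j : ℕ} (htd : (t, j) ∈ sol.dom)
    {k0 : Fin qmax} (hk0 : (sol.val ((0:ℝ), (0:ℕ))).2.1 = ((k0 : ℕ) : ℝ) + 1) :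
    ∃ (Tu : ℝ) (k : Fin qmax), 0 ≤ Tu ∧ Tu ≤ η₂ * t + T₀ ∧
      V k ((sol.val (t, j)).1) ≤
        Real.exp ((j : ℝ) * Real.log χ + lamu * Tu - lams * (t - Tu)) *
          V k0 ((sol.val ((0:ℝ), (0:ℕ))).1) := by
  set W₀ := V k0 ((sol.val ((0:ℝ), (0:ℕ))).1) with hW₀
  have ht0 : (0:ℝ) ≤ t := sol.htd.time_nonneg htd
  obtain ⟨r, hri, hrj1, hflow, hjump⟩ := sol.htd.chain sol.init htd (Nat.zero_le j) ht0
  -- one flow step preserving the invariant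
  have hstep : ∀ (m : ℕ) (a b : ℝ), (a, m) ∈ sol.dom → (b, m) ∈ sol.dom → a ≤ b →
      ∀ (k : Fin qmax) (Tu : ℝ), (sol.val (a, m)).2.1 = ((k : ℕ) : ℝ) + 1 → 0 ≤ Tu →
      Tu ≤ η₂ * a - (sol.val (a, m)).2.2.2 + (sol.val ((0:ℝ), (0:ℕ))).2.2.2 →
      V k ((sol.val (a, m)).1) ≤
        Real.exp ((m : ℝ) * Real.log χ + lamu * Tu - lams * (a - Tu)) * W₀ →
      ∃ Tu' : ℝ, 0 ≤ Tu' ∧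
        Tu' ≤ η₂ * b - (sol.val (b, m)).2.2.2 + (sol.val ((0:ℝ), (0:ℕ))).2.2.2 ∧
        (sol.val (b, m)).2.1 = ((k : ℕ) : ℝ) + 1 ∧
        V k ((sol.val (b, m)).1) ≤
          Real.exp ((m : ℝ) * Real.log χ + lamu * Tu' - lams * (b - Tu')) * W₀ := by
    intro m a b ham hbm hab k Tu hka hTu0 hTub hVa
    have hgr := gron_slice hsol hUcl hN₀ hOV hUOV hV hreg hstab hunst ham hbm hab hka
    have hq := q_const hsol ham hbm
    have htau := tau2_bound hsol ham hbm hab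
    rw [hka, indU_mode] at htau
    refine ⟨Tu + (if unst k then (b - a) else 0), ?_, ?_, by rw [hq, hka], ?_⟩
    · rcases Bool.eq_false_or_eq_true (unst k) with hu | hu
      · rw [if_pos hu]; linarith
      · rw [if_neg (by simp [hu])]; linarith
    · rcases Bool.eq_false_or_eq_true (unst k) with hu | hu
      · rw [if_pos hu] at htau ⊢; linarith
      · rw [if_neg (by simp [hu])] at htau ⊢; linarith
    · have hexp : V k ((sol.val (a, m)).1) *
          Real.exp ((if unst k then lamu else -lams) * (b - a)) ≤
          Real.exp ((m : ℝ) * Real.log χ + lamu * Tu - lams * (a - Tu)) *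
            Real.exp ((if unst k then lamu else -lams) * (b - a)) * W₀ := by
        have := mul_le_mul_of_nonneg_right hVa (Real.exp_pos
          ((if unst k then lamu else -lams) * (b - a))).le
        calc V k ((sol.val (a, m)).1) *
            Real.exp ((if unst k then lamu else -lams) * (b - a)) ≤
            Real.exp ((m : ℝ) * Real.log χ + lamu * Tu - lams * (a - Tu)) * W₀ *
              Real.exp ((if unst k then lamu else -lams) * (b - a)) := this
        _ = Real.exp ((m : ℝ) * Real.log χ + lamu * Tu - lams * (a - Tu)) *
              Real.exp ((if unst k then lamu else -lams) * (b - a)) * W₀ := by ring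
      refine le_trans hgr (le_trans hexp (le_of_eq ?_))
      rw [← Real.exp_add]
      congr 1
      by_cases hu : unst k <;> simp [hu] <;> ring
  -- induction along the chain
  have key : ∀ m, m ≤ j →
      ∃ (Tu : ℝ) (k : Fin qmax), 0 ≤ Tu ∧
        Tu ≤ η₂ * (r m) - (sol.val (r m, m)).2.2.2 + (sol.val ((0:ℝ), (0:ℕ))).2.2.2 ∧
        (sol.val (r m, m)).2.1 = ((k : ℕ) : ℝ) + 1 ∧
        V k ((sol.val (r m, m)).1) ≤
          Real.exp ((m : ℝ) * Real.log χ + lamu * Tu - lams * (r m - Tu)) * W₀ := by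
    intro m
    induction m with
    | zero =>
      intro _
      refine ⟨0, k0, le_refl 0, ?_, ?_, ?_⟩
      · rw [hri]; simp
      · rw [hri]; exact hk0
      · rw [hri]
        norm_num
        exact le_rfl
    | succ m ih =>
      intro hmj
      have hmj' : m ≤ j := by omega
      have hmlt : m < j := by omega
      obtain ⟨Tu, k, hTu0, hTub, hka, hVa⟩ := ih hmj'
      obtain ⟨hle, hm1, hm2⟩ := hflow m (Nat.zero_le m) hmj'
      obtain ⟨Tu', hTu'0, hTu'b, hq2, hVb⟩ :=
        hstep m (r m) (r (m+1)) hm1 hm2 hle k Tu hka hTu0 hTub hVa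
      have hjd : (r (m+1), m+1) ∈ sol.dom := hjump m (Nat.zero_le m) hmlt
      have hjm := jump_facts hsol hm2 hjd
      obtain ⟨k', hk'⟩ := mode_exists hsol hUcl hN₀ hjd
      have huUh : (sol.val (r (m+1), m)).1 ∈ Uh := (mem_swD_iff.mp hjm.2.2.2.2).1
      refine ⟨Tu', k', hTu'0, ?_, hk', ?_⟩
      · rw [hjm.2.2.2.1]; exact hTu'b
      · have hVc : V k' ((sol.val (r (m+1), m+1)).1) ≤ χ * V k ((sol.val (r (m+1), m)).1) := by
          rw [hjm.1]
          exact hcomp k' k _ huUh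
        calc V k' ((sol.val (r (m+1), m+1)).1) ≤ χ * V k ((sol.val (r (m+1), m)).1) := hVc
        _ ≤ χ * (Real.exp ((m : ℝ) * Real.log χ + lamu * Tu' - lams * (r (m+1) - Tu')) * W₀) :=
          mul_le_mul_of_nonneg_left hVb (by linarith)
        _ = Real.exp (((m : ℝ) + 1) * Real.log χ + lamu * Tu' - lams * (r (m+1) - Tu')) * W₀ := by
          rw [show ((m : ℝ) + 1) * Real.log χ + lamu * Tu' - lams * (r (m+1) - Tu') =
            Real.log χ + ((m : ℝ) * Real.log χ + lamu * Tu' - lams * (r (m+1) - Tu')) by ring]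
          rw [Real.exp_add, Real.exp_log (by linarith : (0:ℝ) < χ)]
          ring
        _ = Real.exp (((m + 1 : ℕ) : ℝ) * Real.log χ + lamu * Tu' -
              lams * (r (m+1) - Tu')) * W₀ := by push_cast; ring_nf
  -- final flow step on level j
  obtain ⟨Tu, k, hTu0, hTub, hka, hVa⟩ := key j (le_refl j)
  obtain ⟨hle, hm1, hm2⟩ := hflow j (Nat.zero_le j) (le_refl j)
  rw [hrj1] at hle hm2
  obtain ⟨Tu', hTu'0, hTu'b, hq2, hVb⟩ :=
    hstep j (r j) t hm1 hm2 hle k Tu hka hTu0 hTub hVa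
  refine ⟨Tu', k, hTu'0, ?_, hVb⟩
  have h0 : 0 ≤ (sol.val (t, j)).2.2.2 :=
    (mem_swC_iff.mp (mem_C hsol hUcl hN₀ t j htd)).2.2.2.1
  have hT : (sol.val ((0:ℝ), (0:ℕ))).2.2.2 ≤ T₀ := by
    have h00 : ((0:ℝ), (0:ℕ)) ∈ sol.dom := sol.init
    exact (mem_swC_iff.mp (mem_C hsol hUcl hN₀ 0 0 h00)).2.2.2.2
  linarith

end SolFacts

/-! ### Class-KL machinery -/

section KLsec

variable {a1 a2 : ℝ → ℝ} {K σ : ℝ}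

/-- Generalized inverse of a class-K∞ function. -/
def KLinv (a1 : ℝ → ℝ) (y : ℝ) : ℝ := sInf {z : ℝ | 0 ≤ z ∧ y ≤ a1 z}

lemma KLinv_set_nonempty (h1top : Tendsto a1 atTop atTop) (y : ℝ) :
    {z : ℝ | 0 ≤ z ∧ y ≤ a1 z}.Nonempty := by
  obtain ⟨z0, hz0⟩ := (h1top.eventually_ge_atTop y).exists_forall_of_atTop
  exact ⟨max z0 0, le_max_right _ _, hz0 _ (le_max_left _ _)⟩

lemma KLinv_bddBelow (y : ℝ) : BddBelow {z : ℝ | 0 ≤ z ∧ y ≤ a1 z} :=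
  ⟨0, fun _ hz => hz.1⟩

lemma KLinv_nonneg (h1top : Tendsto a1 atTop atTop) (y : ℝ) : 0 ≤ KLinv a1 y :=
  le_csInf (KLinv_set_nonempty h1top y) fun _ hz => hz.1

lemma le_KLinv (h1top : Tendsto a1 atTop atTop) (h1mono : StrictMonoOn a1 (Ici 0))
    {d y : ℝ} (hd : 0 ≤ d) (hy : a1 d ≤ y) : d ≤ KLinv a1 y := by
  apply le_csInf (KLinv_set_nonempty h1top y)
  intro z hz
  by_contra hzd
  push_neg at hzd
  have := h1mono hz.1 hd hzd
  linarith [hz.2]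

lemma KLinv_le {ε y : ℝ} (hε : 0 ≤ ε) (hy : y ≤ a1 ε) : KLinv a1 y ≤ ε :=
  csInf_le (KLinv_bddBelow y) ⟨hε, hy⟩

lemma KLinv_mono (h1top : Tendsto a1 atTop atTop) {y y' : ℝ} (hyy : y ≤ y') :
    KLinv a1 y ≤ KLinv a1 y' :=
  csInf_le_csInf (KLinv_bddBelow y) (KLinv_set_nonempty h1top y')
    fun z hz => ⟨hz.1, le_trans hyy hz.2⟩

/-- The exponential class-KL bound built from class-K∞ data. -/
lemma classKL_KLexp (h1mono : StrictMonoOn a1 (Ici 0)) (h1top : Tendsto a1 atTop atTop)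
    (h1pos : ∀ z : ℝ, 0 < z → 0 < a1 z)
    (h2mono : MonotoneOn a2 (Ici 0)) (h2nonneg : ∀ r : ℝ, 0 ≤ r → 0 ≤ a2 r)
    (h2cont : Tendsto a2 (𝓝[>] 0) (𝓝 0))
    (hK : 0 < K) (hσ : 0 < σ) :
    ClassKL (fun r s => KLinv a1 (K * Real.exp (-(σ * s)) * a2 r)) := by
  have habs : ∀ y : ℝ, |KLinv a1 y| = KLinv a1 y := fun y =>
    abs_of_nonneg (KLinv_nonneg h1top y)
  have hsmall : ∀ {l : Filter ℝ} {y : ℝ → ℝ}, Tendsto y l (𝓝 0) →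
      Tendsto (fun x => KLinv a1 (y x)) l (𝓝 0) := by
    intro l y hy
    rw [Metric.tendsto_nhds]
    intro ε hε
    have hpos : 0 < a1 (ε/2) := h1pos _ (by linarith)
    have hev : ∀ᶠ x in l, y x < a1 (ε/2) := by
      have := Metric.tendsto_nhds.mp hy _ hpos
      filter_upwards [this] with x hx
      rw [Real.dist_eq, sub_zero] at hx
      exact lt_of_le_of_lt (le_abs_self _) hx
    filter_upwards [hev] with x hx
    rw [Real.dist_eq, sub_zero, habs]
    have := KLinv_le (a1 := a1) (by linarith : (0:ℝ) ≤ ε/2) hx.le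
    linarith
  refine ⟨?_, ?_, ?_, ?_, ?_⟩
  · intro r s _ _; exact KLinv_nonneg h1top _
  · intro s _
    intro r hr r' hr' hrr
    apply KLinv_mono h1top
    apply mul_le_mul_of_nonneg_left (h2mono hr hr' hrr)
    positivity
  · intro r hr
    intro s hs s' hs' hss
    apply KLinv_mono h1top
    apply mul_le_mul_of_nonneg_right _ (h2nonneg r hr)
    apply mul_le_mul_of_nonneg_left _ hK.le
    apply Real.exp_le_exp.mpr
    have := mul_le_mul_of_nonneg_left hss hσ.le
    linarith
  · intro s _
    apply hsmall
    have h2 : Tendsto (fun r => (K * Real.exp (-(σ * s))) * a2 r) (𝓝[>] 0) (𝓝 0) := by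
      have := h2cont.const_mul (K * Real.exp (-(σ * s)))
      simpa using this
    exact h2.congr fun r => by ring
  · intro r _
    apply hsmall
    have hexp : Tendsto (fun s : ℝ => Real.exp (-(σ * s))) atTop (𝓝 0) := by
      apply Real.tendsto_exp_atBot.comp
      apply Filter.tendsto_neg_atTop_atBot.comp
      exact Tendsto.const_mul_atTop hσ tendsto_id
    have h2 : Tendsto (fun s : ℝ => Real.exp (-(σ * s)) * (K * a2 r)) atTop (𝓝 0) := by
      have := hexp.mul_const (K * a2 r)
      simpa using this
    exact h2.congr fun s => by ring

end KLsec

lemma infDist_prod_eq {X Y : Type*} [PseudoMetricSpace X] [PseudoMetricSpace Y]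
    {O : Set X} (hO : O.Nonempty) {S : Set Y} {z : X × Y} (hz : z.2 ∈ S) :
    infDist z (O ×ˢ S) = infDist z.1 O := by
  apply le_antisymm
  · apply le_of_forall_pos_le_add
    intro ε hε
    have hlt : infDist z.1 O < infDist z.1 O + ε := by linarith
    obtain ⟨o, ho, hdo⟩ := (Metric.infDist_lt_iff hO).mp hlt
    have hmem : (o, z.2) ∈ O ×ˢ S := ⟨ho, hz⟩
    have : infDist z (O ×ˢ S) ≤ dist z (o, z.2) := Metric.infDist_le_dist_of_mem hmem
    rw [Prod.dist_eq] at this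
    simp only [dist_self] at this
    calc infDist z (O ×ˢ S) ≤ max (dist z.1 o) 0 := this
    _ = dist z.1 o := max_eq_left dist_nonneg
    _ ≤ infDist z.1 O + ε := hdo.le
  · by_contra hcon
    push_neg at hcon
    obtain ⟨y, hy, hdy⟩ := (Metric.infDist_lt_iff (hO.prod ⟨z.2, hz⟩)).mp hcon
    have h1 : infDist z.1 O ≤ dist z.1 y.1 := Metric.infDist_le_dist_of_mem hy.1
    have h2 : dist z.1 y.1 ≤ dist z y := by rw [Prod.dist_eq]; exact le_max_left _ _
    linarith

set_option maxHeartbeats 1000000 in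
/-- Proposition 3 of the paper: seeking with switching
stable/unstable modes under average dwell-time and activation-time constraints. -/
theorem statement12
    {n : ℕ} (qmax : ℕ) (hq : 0 < qmax) (unst : Fin qmax → Bool)
    (f : Fin qmax → E n → E n → Set (E n))
    (Uh : Set (E n)) (hUcl : IsClosed Uh)
    (J : E n → ℝ) (hJ : ContDiff ℝ 1 J)
    (O : Set (E n)) (hOcp : IsCompact O) (hOne : O.Nonempty) (hOU : O ⊆ Uh)
    -- regularity of each mode
    (hreg : ∀ q : Fin qmax,
      OSCRel (fun uu => f q uu (gradient J uu)) Uh ∧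
      LocBddRel (fun uu => f q uu (gradient J uu)) Uh ∧
      (∀ uu ∈ Uh, (f q uu (gradient J uu)).Nonempty ∧ Convex ℝ (f q uu (gradient J uu))))
    -- mode-dependent Lyapunov functions
    (χ : ℝ) (hχ : 1 ≤ χ)
    (α₁ α₂ : Fin qmax → ℝ → ℝ)
    (hα₁ : ∀ q, ClassKInf (α₁ q)) (hα₂ : ∀ q, ClassKInf (α₂ q))
    (lams lamu : ℝ) (hlams : 0 < lams) (hlamu : 0 < lamu)
    (OV : Set (E n)) (hOV : IsOpen OV) (hUOV : Uh ⊆ OV)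
    (V : Fin qmax → E n → ℝ) (hV : ∀ q, ContDiffOn ℝ 1 (V q) OV)
    (hVnn : ∀ q, ∀ uu ∈ OV, 0 ≤ V q uu)
    (hsand : ∀ q : Fin qmax, ∀ uu ∈ Uh,
      α₁ q (infDist uu O) ≤ V q uu ∧ V q uu ≤ α₂ q (infDist uu O))
    (hstab : ∀ q : Fin qmax, unst q = false → ∀ uu ∈ Uh,
      ∀ ft ∈ f q uu (gradient J uu), ⟪gradient (V q) uu, ft⟫ ≤ -(lams * V q uu))
    (hunst : ∀ q : Fin qmax, unst q = true → ∀ uu ∈ Uh,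
      ∀ ft ∈ f q uu (gradient J uu), ⟪gradient (V q) uu, ft⟫ ≤ lamu * V q uu)
    (hcomp : ∀ p q : Fin qmax, ∀ uu ∈ Uh, V p uu ≤ χ * V q uu)
    -- dwell-time / activation-time parameters
    (η₁ η₂ N₀ T₀ : ℝ) (hη₁ : 0 < η₁) (hη₂0 : 0 ≤ η₂) (hη₂1 : η₂ < 1)
    (hN₀ : 1 ≤ N₀) (hT₀ : 0 ≤ T₀)
    (hrate : lams > η₁ * Real.log χ + η₂ * (lams + lamu)) :
    -- UGAS of the compact set 𝒪 × Q × [0,N₀] × [0,T₀]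
    UGAS (swAT qmax unst f J Uh N₀ T₀ η₁ η₂)
      (O ×ˢ Qset qmax ×ˢ Icc 0 N₀ ×ˢ Icc 0 T₀) ∧
    -- every solution satisfies the average dwell-time bound and the
    -- activation-time bound
    (∀ sol : Arc (E n × ℝ × ℝ × ℝ), IsSolution (swAT qmax unst f J Uh N₀ T₀ η₁ η₂) sol →
      (∀ (s t : ℝ) (i j : ℕ), (s, i) ∈ sol.dom → (t, j) ∈ sol.dom →
        s + (i : ℝ) ≤ t + (j : ℝ) → (j : ℝ) - (i : ℝ) ≤ η₁ * (t - s) + N₀) ∧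
      (∀ (s t : ℝ) (i j : ℕ), (s, i) ∈ sol.dom → (t, j) ∈ sol.dom →
        s + (i : ℝ) ≤ t + (j : ℝ) →
        (∫ r in s..t,
            indU qmax unst ((sol.val (r, sInf {j' : ℕ | (r, j') ∈ sol.dom})).2.1))
          ≤ T₀ + η₂ * (t - s))) := by
  haveI : Nonempty (Fin qmax) := ⟨⟨0, hq⟩⟩
  have Hne : (Finset.univ : Finset (Fin qmax)).Nonempty := Finset.univ_nonempty
  -- combined class-K∞ envelopes
  set a1 : ℝ → ℝ := fun x => Finset.univ.inf' Hne fun q => α₁ q x with ha1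
  set a2 : ℝ → ℝ := fun x => Finset.univ.sup' Hne fun q => α₂ q x with ha2
  have h1mono : StrictMonoOn a1 (Ici 0) := by
    intro x hx y hy hxy
    obtain ⟨q0, -, hq0⟩ := Finset.exists_mem_eq_inf' Hne (fun q => α₁ q y)
    calc a1 x ≤ α₁ q0 x := Finset.inf'_le _ (Finset.mem_univ q0)
    _ < α₁ q0 y := (hα₁ q0).2.2.1 hx hy hxy
    _ = a1 y := hq0.symm
  have h1top : Tendsto a1 atTop atTop := by
    rw [Filter.tendsto_atTop]
    intro b
    have h : ∀ᶠ r in atTop, ∀ q ∈ Finset.univ, b ≤ α₁ q r := by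
      rw [Finset.eventually_all]
      exact fun q _ => (hα₁ q).2.2.2.eventually_ge_atTop b
    filter_upwards [h] with r hr
    exact Finset.le_inf' Hne _ fun q hqm => hr q hqm
  have h1pos : ∀ z : ℝ, 0 < z → 0 < a1 z := by
    intro z hz
    obtain ⟨q0, -, hq0⟩ := Finset.exists_mem_eq_inf' Hne (fun q => α₁ q z)
    rw [ha1]
    simp only []
    rw [hq0, ← (hα₁ q0).2.1]
    exact (hα₁ q0).2.2.1 self_mem_Ici (le_of_lt hz) hz
  have h2mono : MonotoneOn a2 (Ici 0) := by
    intro x hx y hy hxy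
    apply Finset.sup'_le
    intro q _
    calc α₂ q x ≤ α₂ q y := (hα₂ q).2.2.1.monotoneOn hx hy hxy
    _ ≤ a2 y := by simp only [ha2]; exact Finset.le_sup' (fun q' => α₂ q' y) (Finset.mem_univ q)
  have h2nonneg : ∀ r : ℝ, 0 ≤ r → 0 ≤ a2 r := by
    intro r hr
    obtain q0 := Classical.arbitrary (Fin qmax)
    calc (0:ℝ) = α₂ q0 0 := ((hα₂ q0).2.1).symm
    _ ≤ α₂ q0 r := (hα₂ q0).2.2.1.monotoneOn self_mem_Ici hr hr
    _ ≤ a2 r := by simp only [ha2]; exact Finset.le_sup' (fun q' => α₂ q' r) (Finset.mem_univ q0)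
  have h2cont : Tendsto a2 (𝓝[>] (0:ℝ)) (𝓝 0) := by
    have hmemIoi : ∀ᶠ r in 𝓝[>] (0:ℝ), r ∈ Ioi (0:ℝ) := eventually_mem_nhdsWithin
    apply squeeze_zero' (hmemIoi.mono fun r hr => h2nonneg r (le_of_lt hr))
      (g := fun r => ∑ q : Fin qmax, α₂ q r)
    · filter_upwards [hmemIoi] with r hr
      apply Finset.sup'_le
      intro q _
      exact Finset.single_le_sum (f := fun q' => α₂ q' r)
        (fun q' _ => by
          calc (0:ℝ) = α₂ q' 0 := ((hα₂ q').2.1).symm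
          _ ≤ α₂ q' r := (hα₂ q').2.2.1.monotoneOn self_mem_Ici (Set.Ioi_subset_Ici_self hr) (le_of_lt hr))
        (Finset.mem_univ q)
    · have : ∀ q : Fin qmax, Tendsto (α₂ q) (𝓝[>] (0:ℝ)) (𝓝 0) := by
        intro q
        have hc := (hα₂ q).1 0 self_mem_Ici
        rw [ContinuousWithinAt, (hα₂ q).2.1] at hc
        exact hc.mono_left (nhdsWithin_mono _ Ioi_subset_Ici_self)
      have := tendsto_finset_sum (Finset.univ : Finset (Fin qmax)) fun q _ => this q
      simpa using this
  -- decay rate constants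
  have hlogχ : 0 ≤ Real.log χ := Real.log_nonneg hχ
  set σ := lams - η₁ * Real.log χ - η₂ * (lams + lamu) with hσdef
  have hσ : 0 < σ := by rw [hσdef]; linarith [hrate]
  have h1η : (0:ℝ) < 1 + η₁ := by linarith
  set σ' := σ / (1 + η₁) with hσ'def
  have hσ' : 0 < σ' := div_pos hσ h1η
  set B := N₀ * Real.log χ + (lamu + lams) * T₀ + σ * N₀ / (1 + η₁) with hB
  set Kc := Real.exp B with hKc
  have hKcpos : 0 < Kc := Real.exp_pos B
  set β : ℝ → ℝ → ℝ := fun r s => KLinv a1 (Kc * Real.exp (-(σ' * s)) * a2 r) with hβ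
  have hKL : ClassKL β := classKL_KLexp h1mono h1top h1pos h2mono h2nonneg h2cont hKcpos hσ'
  constructor
  · -- UGAS
    refine ⟨β, hKL, ?_⟩
    rintro sol hmax ⟨t, j⟩ htd
    have hsol := hmax.1
    have ht0 : (0:ℝ) ≤ t := sol.htd.time_nonneg htd
    -- membership facts
    have hCt := mem_swC_iff.mp (mem_C hsol hUcl hN₀ t j htd)
    have hC0 := mem_swC_iff.mp (mem_C hsol hUcl hN₀ 0 0 sol.init)
    -- distances
    have hdeq : infDist (sol.val (t, j)) (O ×ˢ Qset qmax ×ˢ Icc 0 N₀ ×ˢ Icc 0 T₀) =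
        infDist (sol.val (t, j)).1 O :=
      infDist_prod_eq hOne ⟨hCt.2.1, hCt.2.2.1, hCt.2.2.2⟩
    have hd0eq : infDist (sol.val ((0:ℝ), (0:ℕ)))
        (O ×ˢ Qset qmax ×ˢ Icc 0 N₀ ×ˢ Icc 0 T₀) =
        infDist (sol.val ((0:ℝ), (0:ℕ))).1 O :=
      infDist_prod_eq hOne ⟨hC0.2.1, hC0.2.2.1, hC0.2.2.2⟩
    set d := infDist (sol.val (t, j)).1 O with hd
    set d0 := infDist (sol.val ((0:ℝ), (0:ℕ))).1 O with hd0
    -- Lyapunov bound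
    obtain ⟨k0, hk0⟩ := mode_exists hsol hUcl hN₀ sol.init
    obtain ⟨Tu, k, hTu0, hTub, hVb⟩ := lyap_bound hsol hUcl hN₀ hT₀ hχ hOV hUOV hV
      (fun q => (hreg q).2.1) hstab hunst hcomp htd hk0
    -- dwell-time bound
    have hADT := adt_bound hsol hUcl hN₀ hη₁ 0 t 0 j sol.init htd
      (by push_cast; linarith [Nat.cast_nonneg (α := ℝ) j])
    have hADT' : (j:ℝ) ≤ η₁ * t + N₀ := by push_cast at hADT; linarith
    -- exponent estimate
    have hX : (j:ℝ) * Real.log χ + lamu * Tu - lams * (t - Tu) ≤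
        B - σ' * (t + (j:ℝ)) := by
      have e1 := mul_le_mul_of_nonneg_right hADT' hlogχ
      have e2 := mul_le_mul_of_nonneg_left hTub (show (0:ℝ) ≤ lamu + lams by linarith)
      have e3 := mul_le_mul_of_nonneg_left hADT' hσ'.le
      have e4 : σ' * (1 + η₁) = σ := by
        rw [hσ'def]; field_simp
      have e5 : σ * N₀ / (1 + η₁) = σ' * N₀ := by rw [hσ'def]; ring
      rw [hB]
      nlinarith [e1, e2, e3, e4, e5, hσdef]
    -- chain of inequalities
    have huT : (sol.val (t, j)).1 ∈ Uh := hCt.1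
    have hu0 : (sol.val ((0:ℝ), (0:ℕ))).1 ∈ Uh := hC0.1
    have hW0nn : 0 ≤ V k0 ((sol.val ((0:ℝ), (0:ℕ))).1) := hVnn k0 _ (hUOV hu0)
    have hchain : a1 d ≤ Kc * Real.exp (-(σ' * (t + (j:ℝ)))) * a2 d0 := by
      calc a1 d ≤ α₁ k d := Finset.inf'_le _ (Finset.mem_univ k)
      _ ≤ V k ((sol.val (t, j)).1) := by rw [hd]; exact (hsand k _ huT).1
      _ ≤ Real.exp ((j:ℝ) * Real.log χ + lamu * Tu - lams * (t - Tu)) *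
            V k0 ((sol.val ((0:ℝ), (0:ℕ))).1) := hVb
      _ ≤ Real.exp (B - σ' * (t + (j:ℝ))) * V k0 ((sol.val ((0:ℝ), (0:ℕ))).1) :=
        mul_le_mul_of_nonneg_right (Real.exp_le_exp.mpr hX) hW0nn
      _ ≤ Real.exp (B - σ' * (t + (j:ℝ))) * a2 d0 := by
        apply mul_le_mul_of_nonneg_left _ (Real.exp_pos _).le
        calc V k0 ((sol.val ((0:ℝ), (0:ℕ))).1) ≤ α₂ k0 d0 := by
              rw [hd0]; exact (hsand k0 _ hu0).2
        _ ≤ a2 d0 := by simp only [ha2]; exact Finset.le_sup' (fun q' => α₂ q' d0) (Finset.mem_univ k0)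
      _ = Kc * Real.exp (-(σ' * (t + (j:ℝ)))) * a2 d0 := by
        rw [hKc, ← Real.exp_add]
        ring_nf
    have hfinal : d ≤ β d0 (t + (j:ℝ)) :=
      le_KLinv h1top h1mono Metric.infDist_nonneg hchain
    rw [hdeq, hd0eq]
    exact hfinal
  · -- dwell-time and activation-time bounds
    intro sol hsol2
    exact ⟨adt_bound hsol2 hUcl hN₀ hη₁, act_bound hsol2 hUcl hN₀ hT₀⟩

end HS
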